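/- arXiv:2408.12755 — 5 statements merged into one kernel-verified Lean document; each statement's English description precedes it below -/
import Mathlib

section
/- Let X be a separable real Banach space. Then the following five conditions are equivalent: (gF-1) for every finite-dimensional subspace E ⊆ X and every ε > 0 there exist δ > 0 and a finite-dimensional subspace F ⊆ X with E ⊆ F such that for all ι, ι′ ∈ Emb_δ(F,X) there exists T ∈ Iso(X) with ‖ι′∘incl − T∘ι∘incl‖ < ε, where incl : E → F is the inclusion; (gF-2) for every finite-dimensional subspace E ⊆ X and every ε > 0 there exist a finite-dimensional normed space F finitely representable in X, φ ∈ Emb_ε(E,F) and δ > 0 such that for every finite-dimensional normed space G finitely representable in X, every ψ ∈ Emb_δ(F,G) and every η > 0 there exists ι ∈ Emb_η(G,X) with ‖Id_E − ι∘ψ∘φ‖ < ε; (gF-3) for every finite-dimensional subspace E ⊆ X and every ε > 0 there exist a finite-dimensional normed space F isometrically embeddable into X, φ ∈ Emb_ε(E,F) and δ > 0 such that for every ψ ∈ Emb_δ(F,X) there exists T ∈ Iso(X) with ‖T∘incl_E − ψ∘φ‖ < ε, where incl_E : E → X is the inclusion; (gF-4) for every finite-dimensional subspace E ⊆ X and every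 ε > 0 there exist a finite-dimensional normed space F isometrically embeddable into X, φ ∈ Emb_ε(E,F) and δ > 0 such that for every finite-dimensional normed space G isometrically embeddable into X and every ψ ∈ Emb_δ(F,G) there exists an isometric embedding ι ∈ Emb(G,X) with ‖Id_E − ι∘ψ∘φ‖ < ε; (gF-5) for every finite-dimensional subspace E ⊆ X and every ε > 0 there exist a finite-dimensional subspace F with E ⊆ F ⊆ X and δ > 0 such that for every finite-dimensional normed space G finitely representable in X, every ψ ∈ Emb_δ(F,G) and every η > 0 there exists ι ∈ Emb_η(G,X) with ‖Id_E − ι∘ψ∘incl‖ < ε, where incl : E → F is the inclusion. -/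
noncomputable section

open Real Metric

/-- A bundled finite-dimensional real normed space. -/
structure FinNormedSpace where
  carrier : Type
  [grp : NormedAddCommGroup carrier]
  [mod : NormedSpace ℝ carrier]
  [fd : FiniteDimensional ℝ carrier]

attribute [instance] FinNormedSpace.grp FinNormedSpace.mod FinNormedSpace.fd

instance : CoeSort FinNormedSpace Type := ⟨FinNormedSpace.carrier⟩

/-- `T ∈ Emb_C(E, F)`. -/
def IsEmbC {E F : Type*} [NormedAddCommGroup E] [NormedSpace ℝ E]
    [NormedAddCommGroup F] [NormedSpace ℝ F] (C : ℝ) (T : E →L[ℝ] F) : Prop :=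
  ∀ x : E, Real.exp (-C) * ‖x‖ ≤ ‖T x‖ ∧ ‖T x‖ ≤ Real.exp C * ‖x‖

/-- `T ∈ Emb(E, F)`, i.e. `T` is a linear isometric embedding. -/
def IsIsomEmb {E F : Type*} [NormedAddCommGroup E] [NormedSpace ℝ E]
    [NormedAddCommGroup F] [NormedSpace ℝ F] (T : E →L[ℝ] F) : Prop :=
  ∀ x : E, ‖T x‖ = ‖x‖

/-- The continuous linear map underlying a surjective linear isometry. -/
def toCLM {X Y : Type*} [NormedAddCommGroup X] [NormedSpace ℝ X]
    [NormedAddCommGroup Y] [NormedSpace ℝ Y] (T : X ≃ₗᵢ[ℝ] Y) : X →L[ℝ] Y :=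
  T.toLinearIsometry.toContinuousLinearMap

/-- `F` is finitely representable in `X`. -/
def FinRep (F : FinNormedSpace) (X : Type*) [NormedAddCommGroup X]
    [NormedSpace ℝ X] : Prop :=
  ∀ ε : ℝ, 0 < ε → ∃ T : F.carrier →L[ℝ] X, IsEmbC ε T

/-- The inclusion of a submodule into a larger one, as a continuous linear map. -/
def inclCLM {X : Type*} [NormedAddCommGroup X] [NormedSpace ℝ X]
    {E F : Submodule ℝ X} (h : E ≤ F) : E →L[ℝ] F :=
  (Submodule.subtypeL E).codRestrict F (fun x => h x.2)

section
variable (X : Type*) [NormedAddCommGroup X] [NormedSpace ℝ X]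

/-- Condition (gF-1). -/
def GF1 : Prop :=
  ∀ (E : Submodule ℝ X), FiniteDimensional ℝ E → ∀ ε : ℝ, 0 < ε →
    ∃ δ : ℝ, 0 < δ ∧ ∃ (F : Submodule ℝ X) (hEF : E ≤ F), FiniteDimensional ℝ F ∧
      ∀ ι ι' : F →L[ℝ] X, IsEmbC δ ι → IsEmbC δ ι' →
        ∃ T : X ≃ₗᵢ[ℝ] X,
          ‖ι'.comp (inclCLM hEF) - (toCLM T).comp (ι.comp (inclCLM hEF))‖ < ε

/-- Condition (gF-2). -/
def GF2 : Prop :=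
  ∀ (E : Submodule ℝ X), FiniteDimensional ℝ E → ∀ ε : ℝ, 0 < ε →
    ∃ (F : FinNormedSpace), FinRep F X ∧ ∃ φ : E →L[ℝ] F.carrier, IsEmbC ε φ ∧
      ∃ δ : ℝ, 0 < δ ∧ ∀ (G : FinNormedSpace), FinRep G X →
        ∀ ψ : F.carrier →L[ℝ] G.carrier, IsEmbC δ ψ → ∀ η : ℝ, 0 < η →
          ∃ ι : G.carrier →L[ℝ] X, IsEmbC η ι ∧
            ‖E.subtypeL - ι.comp (ψ.comp φ)‖ < ε

/-- Condition (gF-3). -/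
def GF3 : Prop :=
  ∀ (E : Submodule ℝ X), FiniteDimensional ℝ E → ∀ ε : ℝ, 0 < ε →
    ∃ (F : FinNormedSpace), (∃ j : F.carrier →L[ℝ] X, IsIsomEmb j) ∧
      ∃ φ : E →L[ℝ] F.carrier, IsEmbC ε φ ∧ ∃ δ : ℝ, 0 < δ ∧
        ∀ ψ : F.carrier →L[ℝ] X, IsEmbC δ ψ →
          ∃ T : X ≃ₗᵢ[ℝ] X, ‖(toCLM T).comp E.subtypeL - ψ.comp φ‖ < ε

/-- Condition (gF-4). -/
def GF4 : Prop :=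
  ∀ (E : Submodule ℝ X), FiniteDimensional ℝ E → ∀ ε : ℝ, 0 < ε →
    ∃ (F : FinNormedSpace), (∃ j : F.carrier →L[ℝ] X, IsIsomEmb j) ∧
      ∃ φ : E →L[ℝ] F.carrier, IsEmbC ε φ ∧ ∃ δ : ℝ, 0 < δ ∧
        ∀ (G : FinNormedSpace), (∃ j : G.carrier →L[ℝ] X, IsIsomEmb j) →
          ∀ ψ : F.carrier →L[ℝ] G.carrier, IsEmbC δ ψ →
            ∃ ι : G.carrier →L[ℝ] X, IsIsomEmb ι ∧
              ‖E.subtypeL - ι.comp (ψ.comp φ)‖ < ε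

/-- Condition (gF-5). -/
def GF5 : Prop :=
  ∀ (E : Submodule ℝ X), FiniteDimensional ℝ E → ∀ ε : ℝ, 0 < ε →
    ∃ (F : Submodule ℝ X) (hEF : E ≤ F), FiniteDimensional ℝ F ∧ ∃ δ : ℝ, 0 < δ ∧
      ∀ (G : FinNormedSpace), FinRep G X →
        ∀ ψ : F →L[ℝ] G.carrier, IsEmbC δ ψ → ∀ η : ℝ, 0 < η →
          ∃ ι : G.carrier →L[ℝ] X, IsEmbC η ι ∧
            ‖E.subtypeL - ι.comp (ψ.comp (inclCLM hEF))‖ < ε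

end

/-!
The implications (gF-1) ⇒ (gF-3) ⇒ (gF-4) ⇒ (gF-2) ⇒ (gF-5) are bookkeeping: a finite-dimensional
subspace is traded for an isometric copy, approximate embeddings are corestricted to their
ranges, and surjective isometries are cancelled against their inverses.

The content is (gF-5) ⇒ (gF-1), an approximate back-and-forth argument. Starting from an almost
isometric `ι` on a guard `F` of `E`, apply (gF-5) over and over while absorbing a dense sequence
of `X`. This yields finite-dimensional `E = A₀ ⊆ A₁ ⊆ ⋯` with dense union and almost isometric
maps `Wₙ` (`W₀` extending `ι`) sending `Aₙ` into `Aₙ₊₁`, such that `Wₙ₊₁ ∘ Wₙ` is `eₙ`-close to the identity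
on `Aₙ` with `∑ eₙ` small. The even maps `W₂ₖ` then converge to a linear isometry `T` of `X` that
is close to `ι` on `E`. The odd maps give approximate preimages under `T`, so the range of `T` is
dense; since it is also closed, `T` is onto. Two such isometries `T₁ ≈ ι` and `T₂ ≈ ι'` give
`ι' ≈ T₂ T₁⁻¹ ι`.
-/

open Filter Topology

section Embeddings

variable {E F G : Type*} [NormedAddCommGroup E] [NormedSpace ℝ E]
  [NormedAddCommGroup F] [NormedSpace ℝ F] [NormedAddCommGroup G] [NormedSpace ℝ G]
  {S : E →L[ℝ] F} {T : F →L[ℝ] G}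

theorem IsEmbC.mono {C C' : ℝ} (hS : IsEmbC C S) (h : C ≤ C') : IsEmbC C' S := fun x =>
  ⟨le_trans (by gcongr) (hS x).1, (hS x).2.trans (by gcongr)⟩

theorem IsEmbC.comp {a b : ℝ} (hS : IsEmbC a S) (hT : IsEmbC b T) :
    IsEmbC (a + b) (T.comp S) := fun x => by
  obtain ⟨hS₁, hS₂⟩ := hS x
  obtain ⟨hT₁, hT₂⟩ := hT (S x)
  rw [neg_add, Real.exp_add, Real.exp_add]
  constructor
  · calc Real.exp (-a) * Real.exp (-b) * ‖x‖ = Real.exp (-b) * (Real.exp (-a) * ‖x‖) := by ring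
      _ ≤ Real.exp (-b) * ‖S x‖ := by gcongr
      _ ≤ ‖T (S x)‖ := hT₁
  · calc ‖T (S x)‖ ≤ Real.exp b * ‖S x‖ := hT₂
      _ ≤ Real.exp b * (Real.exp a * ‖x‖) := by gcongr
      _ = Real.exp a * Real.exp b * ‖x‖ := by ring

theorem IsEmbC.isIsomEmb_comp {a : ℝ} (hS : IsEmbC a S) (hT : IsIsomEmb T) :
    IsEmbC a (T.comp S) := fun x => by
  simpa only [ContinuousLinearMap.comp_apply, hT (S x)] using hS x

theorem IsEmbC.comp_isIsomEmb {a : ℝ} (hT : IsEmbC a T) (hS : IsIsomEmb S) :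
    IsEmbC a (T.comp S) := fun x => by
  simpa only [ContinuousLinearMap.comp_apply, hS x] using hT (S x)

theorem IsEmbC.opNorm_le {C : ℝ} (hS : IsEmbC C S) : ‖S‖ ≤ Real.exp C :=
  S.opNorm_le_bound (Real.exp_nonneg _) fun x => (hS x).2

theorem IsEmbC.norm_apply_le_three {C : ℝ} (hS : IsEmbC C S) (hC : C ≤ 1) (x : E) :
    ‖S x‖ ≤ 3 * ‖x‖ :=
  (hS x).2.trans <| by
    gcongr
    exact (Real.exp_le_exp.2 hC).trans (Real.exp_one_lt_d9.le.trans (by norm_num))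

theorem IsIsomEmb.isEmbC (hS : IsIsomEmb S) {C : ℝ} (hC : 0 ≤ C) : IsEmbC C S := fun x => by
  rw [hS x]
  exact ⟨mul_le_of_le_one_left (norm_nonneg x) (Real.exp_le_one_iff.2 (by linarith)),
    le_mul_of_one_le_left (norm_nonneg x) (Real.one_le_exp hC)⟩

theorem IsIsomEmb.comp (hS : IsIsomEmb S) (hT : IsIsomEmb T) : IsIsomEmb (T.comp S) := fun x => by
  simp only [ContinuousLinearMap.comp_apply, hT (S x), hS x]

theorem IsIsomEmb.norm_comp (hT : IsIsomEmb T) (f : E →L[ℝ] F) : ‖T.comp f‖ = ‖f‖ :=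
  LinearIsometry.norm_toContinuousLinearMap_comp (f := ⟨T.toLinearMap, hT⟩)

theorem isIsomEmb_toCLM (T : F ≃ₗᵢ[ℝ] G) : IsIsomEmb (toCLM T) := T.norm_map

theorem isIsomEmb_subtypeL (V : Submodule ℝ F) : IsIsomEmb V.subtypeL := fun _ => rfl

theorem isIsomEmb_inclCLM {V V' : Submodule ℝ F} (h : V ≤ V') : IsIsomEmb (inclCLM h) :=
  fun _ => rfl

theorem norm_toCLM_comp_sub (T : F ≃ₗᵢ[ℝ] G) (f : E →L[ℝ] F) (g : E →L[ℝ] G) :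
    ‖(toCLM T).comp f - g‖ = ‖f - (toCLM T.symm).comp g‖ := by
  have : (toCLM T).comp f - g = (toCLM T).comp (f - (toCLM T.symm).comp g) := by
    ext x
    simp [toCLM]
  rw [this, (isIsomEmb_toCLM T).norm_comp]

theorem norm_sub_comp_le (u : E →L[ℝ] G) (P : F →L[ℝ] G) (v v' : E →L[ℝ] F) :
    ‖u - P.comp v‖ ≤ ‖u - P.comp v'‖ + ‖P‖ * ‖v' - v‖ := by
  have : u - P.comp v = (u - P.comp v') + P.comp (v' - v) := by
    rw [ContinuousLinearMap.comp_sub]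
    abel
  rw [this]
  calc ‖u - P.comp v' + P.comp (v' - v)‖ ≤ ‖u - P.comp v'‖ + ‖P.comp (v' - v)‖ := norm_add_le _ _
    _ ≤ ‖u - P.comp v'‖ + ‖P‖ * ‖v' - v‖ := by gcongr; exact P.opNorm_comp_le _

end Embeddings

section SmallCopy

variable {X : Type*} [NormedAddCommGroup X] [NormedSpace ℝ X]

/-- A copy of `S` in `Type`, where the carriers of `FinNormedSpace` live. -/
def SmallCopy (S : Submodule ℝ X) : Type := Fin (Module.finrank ℝ S) → ℝ

namespace SmallCopy

variable (S : Submodule ℝ X) [FiniteDimensional ℝ S]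

instance : AddCommGroup (SmallCopy S) := Pi.addCommGroup

instance : Module ℝ (SmallCopy S) := Pi.module _ _ _

def linearEquiv : SmallCopy S ≃ₗ[ℝ] S := (Module.finBasis ℝ S).equivFun.symm

instance : NormedAddCommGroup (SmallCopy S) :=
  NormedAddCommGroup.induced _ S (linearEquiv S).toLinearMap (linearEquiv S).injective

instance : NormedSpace ℝ (SmallCopy S) :=
  NormedSpace.induced ℝ _ S (linearEquiv S).toLinearMap

instance : FiniteDimensional ℝ (SmallCopy S) := Module.Finite.equiv (linearEquiv S).symm

def isometryEquiv : SmallCopy S ≃ₗᵢ[ℝ] S := ⟨linearEquiv S, fun _ => rfl⟩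

end SmallCopy

def FinNormedSpace.ofSubmodule (S : Submodule ℝ X) [FiniteDimensional ℝ S] : FinNormedSpace :=
  ⟨SmallCopy S⟩

namespace FinNormedSpace

variable (S : Submodule ℝ X) [FiniteDimensional ℝ S]

def embedding : (ofSubmodule S).carrier →L[ℝ] X :=
  S.subtypeL.comp (toCLM (SmallCopy.isometryEquiv S))

theorem isIsomEmb_embedding : IsIsomEmb (embedding S) :=
  (isIsomEmb_toCLM _).comp (isIsomEmb_subtypeL S)

theorem finRep_ofSubmodule : FinRep (ofSubmodule S) X :=
  fun _ hε => ⟨embedding S, (isIsomEmb_embedding S).isEmbC hε.le⟩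

def corestrict {E : Type*} [NormedAddCommGroup E] [NormedSpace ℝ E] (T : E →L[ℝ] X)
    (hT : ∀ x, T x ∈ S) : E →L[ℝ] (ofSubmodule S).carrier :=
  (toCLM (SmallCopy.isometryEquiv S).symm).comp (T.codRestrict S hT)

end FinNormedSpace

theorem IsEmbC.corestrict {S : Submodule ℝ X} [FiniteDimensional ℝ S] {E : Type*}
    [NormedAddCommGroup E] [NormedSpace ℝ E] {T : E →L[ℝ] X} {C : ℝ} (h : IsEmbC C T)
    (hT : ∀ x, T x ∈ S) : IsEmbC C (FinNormedSpace.corestrict S T hT) :=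
  IsEmbC.isIsomEmb_comp (fun x => h x) (isIsomEmb_toCLM _)

end SmallCopy

section Implications

variable {X : Type*} [NormedAddCommGroup X] [NormedSpace ℝ X]

theorem gf3_of_gf1 (h1 : GF1 X) : GF3 X := by
  intro E hE ε hε
  obtain ⟨δ, hδ, F, hEF, hF, H⟩ := h1 E hE ε hε
  let e : F →L[ℝ] (FinNormedSpace.ofSubmodule F).carrier := toCLM (SmallCopy.isometryEquiv F).symm
  refine ⟨.ofSubmodule F, ⟨_, FinNormedSpace.isIsomEmb_embedding F⟩, e.comp (inclCLM hEF),
    ((isIsomEmb_inclCLM hEF).comp (isIsomEmb_toCLM _)).isEmbC hε.le, δ, hδ, fun ψ hψ => ?_⟩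
  obtain ⟨T, hT⟩ := H F.subtypeL (ψ.comp e) ((isIsomEmb_subtypeL F).isEmbC hδ.le)
    (hψ.comp_isIsomEmb (isIsomEmb_toCLM _))
  exact ⟨T, (norm_sub_rev (E := E →L[ℝ] X) _ _).trans_lt hT⟩

theorem gf4_of_gf3 (h3 : GF3 X) : GF4 X := by
  intro E hE ε hε
  obtain ⟨F, hF, φ, hφ, δ, hδ, H⟩ := h3 E hE ε hε
  refine ⟨F, hF, φ, hφ, δ, hδ, ?_⟩
  rintro G ⟨j, hj⟩ ψ hψ
  obtain ⟨T, hT⟩ := H (j.comp ψ) (hψ.isIsomEmb_comp hj)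
  rw [norm_toCLM_comp_sub] at hT
  exact ⟨(toCLM T.symm).comp j, hj.comp (isIsomEmb_toCLM _), hT⟩

theorem gf2_of_gf4 (h4 : GF4 X) : GF2 X := by
  intro E hE ε hε
  obtain ⟨F, ⟨jF, hjF⟩, φ, hφ, δ, hδ, H⟩ := h4 E hE ε hε
  refine ⟨F, fun _ hη => ⟨jF, hjF.isEmbC hη.le⟩, φ, hφ, δ / 2, half_pos hδ,
    fun G hG ψ hψ η hη => ?_⟩
  set θ := min η (δ / 2)
  obtain ⟨j, hj⟩ := hG θ (lt_min hη (half_pos hδ))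
  -- `G` is replaced by a copy of `j(G) ⊆ X`, which embeds isometrically as (gF-4) requires
  let S := LinearMap.range (j : G.carrier →ₗ[ℝ] X)
  let jc := FinNormedSpace.corestrict S j (LinearMap.mem_range_self _)
  have hjc : IsEmbC θ jc := hj.corestrict _
  obtain ⟨ι, hι, hb⟩ := H _ ⟨_, FinNormedSpace.isIsomEmb_embedding S⟩ (jc.comp ψ)
    ((hψ.comp hjc).mono (by linarith [min_le_right η (δ / 2)]))
  exact ⟨ι.comp jc, (hjc.isIsomEmb_comp hι).mono (min_le_left _ _), hb⟩

theorem gf5_of_gf2 (h2 : GF2 X) : GF5 X := by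
  intro E hE ε hε
  -- the precision asked of (gF-2), so that `ε' + exp 2 * ε' = ε`
  set ε' := ε / (1 + Real.exp 2)
  have hε' : 0 < ε' := by positivity
  obtain ⟨F, hF, φ, hφ, δ, hδ, H⟩ := h2 E hE ε' hε'
  set δ' := min (δ / 2) 1
  have hδ' : 0 < δ' := lt_min (half_pos hδ) one_pos
  obtain ⟨ι₀, hι₀, hb₀⟩ := H F hF (.id ℝ F.carrier)
    (IsIsomEmb.isEmbC (S := .id ℝ F.carrier) (fun _ => rfl) hδ.le)
    δ' hδ'
  -- any `ψ` on the guard `E ⊔ ι₀(F)` is fed back to (gF-2) as `ψ ∘ ι₀`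
  let Fh : Submodule ℝ X := E ⊔ LinearMap.range (ι₀ : F.carrier →ₗ[ℝ] X)
  have hEFh : E ≤ Fh := le_sup_left
  let ιt : F.carrier →L[ℝ] Fh :=
    ι₀.codRestrict Fh fun x => Submodule.mem_sup_right (LinearMap.mem_range_self _ x)
  have hιt : ‖ιt.comp φ - inclCLM hEFh‖ < ε' := by
    have : Fh.subtypeL.comp (ιt.comp φ - inclCLM hEFh) = ι₀.comp φ - E.subtypeL := by
      ext x
      rfl
    rw [← (isIsomEmb_subtypeL Fh).norm_comp, this, ← ι₀.comp_id]
    exact (norm_sub_rev (E := E →L[ℝ] X) _ _).trans_lt hb₀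
  refine ⟨Fh, hEFh, Submodule.finiteDimensional_sup _ _, δ', hδ', fun G hG ψ hψ η hη => ?_⟩
  have hψιt : IsEmbC δ (ψ.comp ιt) :=
    ((show IsEmbC δ' ιt from fun x => hι₀ x).comp hψ).mono (by linarith [min_le_left (δ / 2) 1])
  obtain ⟨ι, hι, hb⟩ := H G hG (ψ.comp ιt) hψιt (min η 1) (lt_min hη one_pos)
  have hP : ‖ι.comp ψ‖ ≤ Real.exp 2 :=
    (hψ.comp hι).opNorm_le.trans (Real.exp_le_exp.2 (by
      linarith [min_le_right (δ / 2) 1, min_le_right η 1]))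
  refine ⟨ι, hι.mono (min_le_left _ _), ?_⟩
  have hb' : ‖E.subtypeL - (ι.comp ψ).comp (ιt.comp φ)‖ < ε' := hb
  rw [← ContinuousLinearMap.comp_assoc]
  calc ‖E.subtypeL - (ι.comp ψ).comp (inclCLM hEFh)‖
      ≤ ‖E.subtypeL - (ι.comp ψ).comp (ιt.comp φ)‖
        + ‖ι.comp ψ‖ * ‖ιt.comp φ - inclCLM hEFh‖ := norm_sub_comp_le _ _ _ _
    _ < ε' + Real.exp 2 * ε' :=
      add_lt_add_of_lt_of_le hb'
        (mul_le_mul hP hιt.le (ContinuousLinearMap.opNorm_nonneg _) (Real.exp_pos 2).le)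
    _ = ε := by
      change ε / (1 + Real.exp 2) + Real.exp 2 * (ε / (1 + Real.exp 2)) = ε
      field_simp

end Implications

theorem norm_eq_of_tendsto_of_exp_bounds {Y : Type*} [NormedAddCommGroup Y] {y : ℕ → Y} {l : Y}
    {γ : ℕ → ℝ} {r : ℝ}
    (hy : Tendsto y atTop (𝓝 l)) (hγ : Tendsto γ atTop (𝓝 0))
    (hb : ∀ᶠ k in atTop, Real.exp (-γ k) * r ≤ ‖y k‖ ∧ ‖y k‖ ≤ Real.exp (γ k) * r) :
    ‖l‖ = r := by
  have hup : Tendsto (fun k => Real.exp (γ k) * r) atTop (𝓝 r) := by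
    simpa using ((Real.continuous_exp.tendsto 0).comp hγ).mul_const r
  have hlo : Tendsto (fun k => Real.exp (-γ k) * r) atTop (𝓝 r) := by
    simpa using ((Real.continuous_exp.tendsto 0).comp (by simpa using hγ.neg)).mul_const r
  exact le_antisymm (le_of_tendsto_of_tendsto hy.norm hup (hb.mono fun _ h => h.2))
    (le_of_tendsto_of_tendsto hlo hy.norm (hb.mono fun _ h => h.1))

section Limits

variable {X Y : Type*} [NormedAddCommGroup X] [NormedSpace ℝ X]
  [NormedAddCommGroup Y] [NormedSpace ℝ Y]

theorem exists_tendsto_norm_sub_le_tsum [CompleteSpace Y] {U : ℕ → Submodule ℝ X}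
    (hU : Monotone U) {f : ℕ → X →L[ℝ] Y} {c : ℕ → ℝ} (hc : Summable c)
    (hstep : ∀ k, ∀ u ∈ U k, ‖f (k + 1) u - f k u‖ ≤ c k * ‖u‖) {m : ℕ} {u : X}
    (hu : u ∈ U m) :
    ∃ l, Tendsto (fun k => f k u) atTop (𝓝 l) ∧ ‖l - f m u‖ ≤ (∑' i, c (m + i)) * ‖u‖ := by
  have hd : ∀ i, dist (f (m + i) u) (f (m + i + 1) u) ≤ c (m + i) * ‖u‖ := fun i => by
    rw [dist_comm, dist_eq_norm]
    exact hstep _ u (hU (Nat.le_add_right m i) hu)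
  have hs : Summable fun i => c (m + i) * ‖u‖ :=
    (hc.comp_injective (add_right_injective m)).mul_right _
  obtain ⟨l, hl⟩ := cauchySeq_tendsto_of_complete (cauchySeq_of_dist_le_of_summable _ hd hs)
  refine ⟨l, (tendsto_add_atTop_iff_nat m).1 (by simpa only [add_comm] using hl), ?_⟩
  have := dist_le_tsum_of_dist_le_of_tendsto₀ _ hd hs hl
  rwa [tsum_mul_right, dist_comm, dist_eq_norm, add_zero] at this

theorem LinearIsometry.exists_extension_of_dense [CompleteSpace Y] {D : Submodule ℝ X}
    (hD : Dense (D : Set X)) (L : D →ₗᵢ[ℝ] Y) : ∃ g : X →ₗᵢ[ℝ] Y, ∀ z : D, g z = L z := by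
  have hdr : DenseRange D.subtypeL := by simpa [DenseRange] using hD
  let h := L.toContinuousLinearMap.extend D.subtypeL
  have heq : ∀ z : D, h z = L z :=
    ContinuousLinearMap.extend_eq _ hdr isometry_subtype_coe.isUniformInducing
  have hnorm : ∀ x, ‖h x‖ = ‖x‖ := fun x =>
    hdr.induction_on (p := fun x => ‖h x‖ = ‖x‖) x
      (isClosed_eq (by fun_prop) continuous_norm) fun z => by simp [heq]
  exact ⟨⟨h.toLinearMap, hnorm⟩, heq⟩

theorem exists_linearIsometry_norm_sub_le_tsum [CompleteSpace Y] {U : ℕ → Submodule ℝ X}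
    (hU : Monotone U) (hdense : Dense (⋃ k, (U k : Set X))) {f : ℕ → X →L[ℝ] Y}
    {γ c : ℕ → ℝ} (hγ : Tendsto γ atTop (𝓝 0))
    (hf : ∀ k, IsEmbC (γ k) ((f k).comp (U k).subtypeL))
    (hc : Summable c) (hstep : ∀ k, ∀ u ∈ U k, ‖f (k + 1) u - f k u‖ ≤ c k * ‖u‖) :
    ∃ g : X →ₗᵢ[ℝ] Y, ∀ k, ∀ u ∈ U k, ‖g u - f k u‖ ≤ (∑' i, c (k + i)) * ‖u‖ := by
  let D := ⨆ k, U k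
  have hmemD : ∀ {z}, z ∈ D ↔ ∃ k, z ∈ U k := Submodule.mem_iSup_of_directed U hU.directed_le
  have hlim : ∀ z : D, ∃ l, Tendsto (fun k => f k z) atTop (𝓝 l) := fun z => by
    obtain ⟨m, hm⟩ := hmemD.1 z.2
    exact (exists_tendsto_norm_sub_le_tsum hU hc hstep hm).imp fun _ h => h.1
  choose L hL using hlim
  let Llin : D →ₗ[ℝ] Y :=
    linearMapOfTendsto L (fun k => ((f k).comp D.subtypeL : D →ₗ[ℝ] Y)) (tendsto_pi_nhds.2 hL)
  have hnorm : ∀ z, ‖Llin z‖ = ‖z‖ := fun z => by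
    obtain ⟨m, hm⟩ := hmemD.1 z.2
    exact norm_eq_of_tendsto_of_exp_bounds (hL z) hγ
      (eventually_atTop.2 ⟨m, fun k hk => hf k ⟨z, hU hk hm⟩⟩)
  have hD : Dense (D : Set X) := by rwa [Submodule.coe_iSup_of_directed U hU.directed_le]
  obtain ⟨g, hg⟩ := LinearIsometry.exists_extension_of_dense hD ⟨Llin, hnorm⟩
  refine ⟨g, fun k u hu => ?_⟩
  obtain ⟨l, hl, hle⟩ := exists_tendsto_norm_sub_le_tsum hU hc hstep hu
  have hu' : u ∈ D := hmemD.2 ⟨k, hu⟩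
  rwa [show g u = l from (hg ⟨u, hu'⟩).trans (tendsto_nhds_unique (hL ⟨u, hu'⟩) hl)]

theorem LinearIsometry.surjective_of_denseRange [CompleteSpace X] (g : X →ₗᵢ[ℝ] Y)
    (h : DenseRange g) : Function.Surjective g := by
  rw [← Set.range_eq_univ, ← g.isometry.isClosedEmbedding.isClosed_range.closure_eq]
  exact h.closure_range

end Limits

section BackAndForth

variable {X : Type*} [NormedAddCommGroup X] [NormedSpace ℝ X]
  {A : ℕ → Submodule ℝ X} {W : ℕ → X →L[ℝ] X} {γ e : ℕ → ℝ}

theorem norm_sub_le_of_backAndForth (hA : Monotone A) (hγ_le : ∀ n, γ n ≤ 1)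
    (hW : ∀ n, IsEmbC (γ n) ((W n).comp (A n).subtypeL))
    (hmaps : ∀ n, ∀ a ∈ A n, W n a ∈ A (n + 1)) (he0 : ∀ n, 0 ≤ e n)
    (hinv : ∀ n, ∀ a ∈ A n, ‖a - W (n + 1) (W n a)‖ ≤ e n * ‖a‖) (n : ℕ) {a : X}
    (ha : a ∈ A n) : ‖W (n + 2) a - W n a‖ ≤ 3 * (e n + e (n + 1)) * ‖a‖ := by
  have hW3 : ∀ n, ∀ x ∈ A n, ‖W n x‖ ≤ 3 * ‖x‖ := fun n x hx =>
    (hW n).norm_apply_le_three (hγ_le n) ⟨x, hx⟩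
  set b := W n a
  have hb : b ∈ A (n + 1) := hmaps n a ha
  have hab : a - W (n + 1) b ∈ A (n + 2) :=
    sub_mem (hA (by omega) ha) (hmaps _ _ hb)
  calc ‖W (n + 2) a - b‖
      = ‖W (n + 2) (a - W (n + 1) b) + (W (n + 2) (W (n + 1) b) - b)‖ := by
        rw [map_sub]; abel_nf
    _ ≤ ‖W (n + 2) (a - W (n + 1) b)‖ + ‖b - W (n + 2) (W (n + 1) b)‖ := by
        rw [norm_sub_rev b]; exact norm_add_le _ _
    _ ≤ 3 * (e n * ‖a‖) + e (n + 1) * (3 * ‖a‖) := by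
        gcongr
        · exact (hW3 _ _ hab).trans (by gcongr; exact hinv n a ha)
        · exact (hinv _ _ hb).trans (by gcongr; exacts [he0 _, hW3 n a ha])
    _ = 3 * (e n + e (n + 1)) * ‖a‖ := by ring

theorem mem_closure_range_of_backAndForth (hA : Monotone A) (hγ_le : ∀ n, γ n ≤ 1)
    (hW : ∀ n, IsEmbC (γ n) ((W n).comp (A n).subtypeL))
    (hmaps : ∀ n, ∀ a ∈ A n, W n a ∈ A (n + 1)) (he : Tendsto e atTop (𝓝 0))
    (hinv : ∀ n, ∀ a ∈ A n, ‖a - W (n + 1) (W n a)‖ ≤ e n * ‖a‖) {g : X → X} {t : ℕ → ℝ}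
    (ht : Tendsto t atTop (𝓝 0)) (ht0 : ∀ k, 0 ≤ t k)
    (hg : ∀ k, ∀ u ∈ A (2 * k), ‖g u - W (2 * k) u‖ ≤ t k * ‖u‖) {n : ℕ} {v : X}
    (hv : v ∈ A n) : v ∈ closure (Set.range g) := by
  have hbound : Tendsto (fun k => t (k + 1) * (3 * ‖v‖) + e (2 * k + 1) * ‖v‖) atTop (𝓝 0) := by
    have hodd : Tendsto (fun k => 2 * k + 1) atTop atTop :=
      (strictMono_mul_left_of_pos two_pos).add_const 1 |>.tendsto_atTop
    simpa using (((tendsto_add_atTop_iff_nat 1).2 ht).mul_const (3 * ‖v‖)).add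
      ((he.comp hodd).mul_const ‖v‖)
  refine mem_closure_of_tendsto (f := fun k => g (W (2 * k + 1) v)) (b := atTop) ?_
    (Eventually.of_forall fun k => Set.mem_range_self _)
  rw [tendsto_iff_norm_sub_tendsto_zero]
  refine squeeze_zero' (Eventually.of_forall fun _ => norm_nonneg _)
    (eventually_atTop.2 ⟨n, fun k hk => ?_⟩) hbound
  have hv' : v ∈ A (2 * k + 1) := hA (by omega) hv
  have hw : W (2 * k + 1) v ∈ A (2 * (k + 1)) := hmaps _ _ hv'
  calc ‖g (W (2 * k + 1) v) - v‖
      ≤ ‖g (W (2 * k + 1) v) - W (2 * (k + 1)) (W (2 * k + 1) v)‖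
        + ‖W (2 * (k + 1)) (W (2 * k + 1) v) - v‖ := norm_sub_le_norm_sub_add_norm_sub _ _ _
    _ ≤ t (k + 1) * (3 * ‖v‖) + e (2 * k + 1) * ‖v‖ := by
        gcongr
        · refine (hg (k + 1) _ hw).trans ?_
          gcongr
          · exact ht0 _
          · exact (hW _).norm_apply_le_three (hγ_le _) ⟨_, hv'⟩
        · rw [norm_sub_rev]
          exact hinv _ _ hv'

theorem exists_linearIsometryEquiv_of_backAndForth [CompleteSpace X] (hA : Monotone A)
    (hdense : Dense (⋃ n, (A n : Set X))) (hγ : Tendsto γ atTop (𝓝 0)) (hγ_le : ∀ n, γ n ≤ 1)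
    (hW : ∀ n, IsEmbC (γ n) ((W n).comp (A n).subtypeL))
    (hmaps : ∀ n, ∀ a ∈ A n, W n a ∈ A (n + 1)) (he0 : ∀ n, 0 ≤ e n) (he : Summable e)
    (hinv : ∀ n, ∀ a ∈ A n, ‖a - W (n + 1) (W n a)‖ ≤ e n * ‖a‖) :
    ∃ T : X ≃ₗᵢ[ℝ] X, ∀ a ∈ A 0, ‖T a - W 0 a‖ ≤ 3 * (∑' n, e n) * ‖a‖ := by
  have hev : Summable fun k => e (2 * k) :=
    he.comp_injective (mul_right_injective₀ two_ne_zero)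
  have hodd : Summable fun k => e (2 * k + 1) :=
    he.comp_injective ((add_left_injective 1).comp (mul_right_injective₀ two_ne_zero))
  set c : ℕ → ℝ := fun k => 3 * (e (2 * k) + e (2 * k + 1))
  obtain ⟨g, hg⟩ := exists_linearIsometry_norm_sub_le_tsum (U := fun k => A (2 * k))
    (f := fun k => W (2 * k)) (c := c) (fun i j h => hA (by omega))
    (hdense.mono (Set.iUnion_mono' fun n => ⟨n, hA (by omega)⟩))
    (hγ.comp (strictMono_mul_left_of_pos two_pos).tendsto_atTop) (fun k => hW (2 * k))
    ((hev.add hodd).mul_left 3)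
    (fun k u hu => norm_sub_le_of_backAndForth hA hγ_le hW hmaps he0 hinv (2 * k) hu)
  have htail : Tendsto (fun k => ∑' i, c (k + i)) atTop (𝓝 0) :=
    (tendsto_sum_nat_add c).congr fun k => tsum_congr fun i => congrArg c (add_comm _ _)
  have hsurj : Function.Surjective g := g.surjective_of_denseRange <| dense_closure.1 <|
    hdense.mono <| Set.iUnion_subset fun n v hv =>
      mem_closure_range_of_backAndForth hA hγ_le hW hmaps he.tendsto_atTop_zero hinv htail
        (fun k => tsum_nonneg fun i => mul_nonneg zero_le_three (add_nonneg (he0 _) (he0 _)))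
        hg hv
  refine ⟨LinearIsometryEquiv.ofSurjective g hsurj, fun a ha => ?_⟩
  have hc : ∑' i, c (0 + i) = 3 * ∑' n, e n := by
    simp only [zero_add, c, tsum_mul_left, hev.tsum_add hodd, tsum_even_add_odd hev hodd]
  simpa only [hc, mul_zero, LinearIsometryEquiv.coe_ofSurjective] using hg 0 a ha

end BackAndForth

section Guards

variable {X : Type*} [NormedAddCommGroup X] [NormedSpace ℝ X]

/-- The clause of (gF-5) satisfied by `F ⊇ A` for the tolerance `δ` and the precision `e`. -/
def IsGuard {A F : Submodule ℝ X} (hAF : A ≤ F) (δ e : ℝ) : Prop :=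
  ∀ (G : FinNormedSpace), FinRep G X → ∀ ψ : F →L[ℝ] G.carrier, IsEmbC δ ψ → ∀ η : ℝ, 0 < η →
    ∃ ι : G.carrier →L[ℝ] X, IsEmbC η ι ∧ ‖A.subtypeL - ι.comp (ψ.comp (inclCLM hAF))‖ < e

theorem IsGuard.exists_norm_sub_le {A F F' : Submodule ℝ X} {hAF : A ≤ F} {δ e : ℝ}
    (hguard : IsGuard hAF δ e) [FiniteDimensional ℝ F'] {w : X →L[ℝ] X}
    (hw : IsEmbC δ (w.comp F.subtypeL)) (hwF' : ∀ y ∈ F, w y ∈ F') {η : ℝ} (hη : 0 < η) :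
    ∃ w' : X →L[ℝ] X, IsEmbC η (w'.comp F'.subtypeL) ∧ ∀ a ∈ A, ‖a - w' (w a)‖ ≤ e * ‖a‖ := by
  let ψ := FinNormedSpace.corestrict F' (w.comp F.subtypeL) fun y => hwF' y y.2
  obtain ⟨ι, hι, hb⟩ := hguard _ (FinNormedSpace.finRep_ofSubmodule F') ψ
    (hw.corestrict _) η hη
  obtain ⟨w', hw'⟩ :=
    (ι.comp (toCLM (SmallCopy.isometryEquiv F').symm)).exist_extension_of_finiteDimensional_range
  refine ⟨w', hw' ▸ hι.comp_isIsomEmb (isIsomEmb_toCLM _), fun a ha => ?_⟩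
  have hval : a - w' (w a) = (A.subtypeL - ι.comp (ψ.comp (inclCLM hAF))) ⟨a, ha⟩ := by
    have := congrArg (fun f => f ⟨w a, hwF' a (hAF ha)⟩) hw'
    exact congrArg (a - ·) this.symm
  rw [hval]
  exact ((A.subtypeL - _).le_opNorm _).trans (mul_le_mul_of_nonneg_right hb.le (norm_nonneg _))

/-- A stage of the back-and-forth construction; the bound `g` on the distortion of `W` is what
makes the distortions tend to `0` along the construction. -/
structure GuardedStage (X : Type*) [NormedAddCommGroup X] [NormedSpace ℝ X] (e g : ℝ) where
  A : Submodule ℝ X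
  F : Submodule ℝ X
  le : A ≤ F
  [finiteDimensional : FiniteDimensional ℝ F]
  δ : ℝ
  isGuard : IsGuard le δ e
  W : X →L[ℝ] X
  isEmbC_W : IsEmbC (min δ g) (W.comp F.subtypeL)

attribute [instance] GuardedStage.finiteDimensional

structure GuardedStage.IsSucc {e g e' g' : ℝ} (s : GuardedStage X e g) (x : X)
    (s' : GuardedStage X e' g') : Prop where
  F_le : s.F ≤ s'.A
  mem : x ∈ s'.A
  mapsTo : ∀ y ∈ s.F, s.W y ∈ s'.A
  norm_sub_le : ∀ a ∈ s.A, ‖a - s'.W (s.W a)‖ ≤ e * ‖a‖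

theorem GuardedStage.exists_isSucc (h5 : GF5 X) {e g e' g' : ℝ} (s : GuardedStage X e g)
    (x : X) (he' : 0 < e') (hg' : 0 < g') : ∃ s' : GuardedStage X e' g', s.IsSucc x s' := by
  let A' := s.F ⊔ s.F.map (s.W : X →ₗ[ℝ] X) ⊔ ℝ ∙ x
  obtain ⟨F', hAF', hF', δ', hδ', hguard⟩ := h5 A' inferInstance e' he'
  have hmaps : ∀ y ∈ s.F, s.W y ∈ A' := fun y hy =>
    Submodule.mem_sup_left (Submodule.mem_sup_right (Submodule.mem_map_of_mem hy))
  obtain ⟨W', hW', hinv⟩ := s.isGuard.exists_norm_sub_le (F' := F')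
    (s.isEmbC_W.mono (min_le_left _ _)) (fun y hy => hAF' (hmaps y hy)) (lt_min hδ' hg')
  exact ⟨⟨A', F', hAF', δ', hguard, W', hW'⟩, le_sup_left.trans le_sup_left,
    Submodule.mem_sup_right (Submodule.mem_span_singleton_self x), hmaps, hinv⟩

theorem GF5.exists_guardedChain (h5 : GF5 X) (x : ℕ → X) {e g : ℕ → ℝ} (he : ∀ n, 0 < e n)
    (hg : ∀ n, 0 < g n) (s₀ : GuardedStage X (e 0) (g 0)) :
    ∃ s : (n : ℕ) → GuardedStage X (e n) (g n),
      s 0 = s₀ ∧ ∀ n, (s n).IsSucc (x n) (s (n + 1)) := by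
  choose next hnext using fun n (s : GuardedStage X (e n) (g n)) =>
    s.exists_isSucc h5 (x n) (he (n + 1)) (hg (n + 1))
  exact ⟨fun n => Nat.rec (motive := fun n => GuardedStage X (e n) (g n)) s₀ next n, rfl,
    fun n => hnext n _⟩

end Guards

section Homogeneity

variable {X : Type*} [NormedAddCommGroup X] [NormedSpace ℝ X]

theorem GF5.exists_linearIsometryEquiv_norm_sub_le [CompleteSpace X]
    [TopologicalSpace.SeparableSpace X] (h5 : GF5 X) (E : Submodule ℝ X)
    (hE : FiniteDimensional ℝ E) {ε : ℝ} (hε : 0 < ε) :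
    ∃ δ : ℝ, 0 < δ ∧ ∃ (F : Submodule ℝ X) (hEF : E ≤ F), FiniteDimensional ℝ F ∧
      ∀ ι : F →L[ℝ] X, IsEmbC δ ι →
        ∃ T : X ≃ₗᵢ[ℝ] X, ‖ι.comp (inclCLM hEF) - (toCLM T).comp E.subtypeL‖ ≤ ε := by
  set e : ℕ → ℝ := fun n => ε / 3 / 2 / 2 ^ n
  set g : ℕ → ℝ := fun n => (1 / 2) ^ n
  have he : ∀ n, 0 < e n := fun n => by positivity
  have hg : ∀ n, 0 < g n := fun n => by positivity
  obtain ⟨F, hEF, hF, δ, hδ, hguard⟩ := h5 E hE (e 0) (he 0)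
  refine ⟨min δ (g 0), lt_min hδ (hg 0), F, hEF, hF, fun ι hι => ?_⟩
  obtain ⟨W₀, hW₀⟩ := ι.exist_extension_of_finiteDimensional_range
  obtain ⟨x, hx⟩ := TopologicalSpace.exists_dense_seq X
  obtain ⟨s, hs₀, hs⟩ := h5.exists_guardedChain x he hg ⟨E, F, hEF, δ, hguard, W₀, hW₀ ▸ hι⟩
  obtain ⟨T, hT⟩ := exists_linearIsometryEquiv_of_backAndForth (A := fun n => (s n).A)
    (W := fun n => (s n).W) (γ := g) (e := e)
    (monotone_nat_of_le_succ fun n => (s n).le.trans (hs n).F_le)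
    (hx.mono (Set.range_subset_iff.2 fun n => Set.mem_iUnion.2 ⟨n + 1, (hs n).mem⟩))
    (tendsto_pow_atTop_nhds_zero_of_lt_one (by norm_num) (by norm_num))
    (fun n => pow_le_one₀ (by norm_num) (by norm_num))
    (fun n => ((s n).isEmbC_W.comp_isIsomEmb (isIsomEmb_inclCLM (s n).le)).mono
      (min_le_right _ _))
    (fun n a ha => (hs n).mapsTo a ((s n).le ha)) (fun n => (he n).le)
    (summable_geometric_two' _) (fun n => (hs n).norm_sub_le)
  refine ⟨T, ContinuousLinearMap.opNorm_le_bound _ hε.le fun a => ?_⟩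
  have hA₀ : (s 0).A = E := by rw [hs₀]
  have hW₀a : (s 0).W a = ι ⟨a, hEF a.2⟩ := by
    rw [hs₀]
    exact (congrArg (fun f => f ⟨a, hEF a.2⟩) hW₀).symm
  have hTa := hT a (hA₀ ▸ a.2)
  rw [tsum_geometric_two', hW₀a, norm_sub_rev] at hTa
  calc ‖ι ⟨a, hEF a.2⟩ - T a‖ ≤ 3 * (ε / 3) * ‖(a : X)‖ := hTa
    _ = ε * ‖a‖ := by rw [mul_div_cancel₀ ε three_ne_zero]; rfl

theorem gf1_of_gf5 [CompleteSpace X] [TopologicalSpace.SeparableSpace X] (h5 : GF5 X) :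
    GF1 X := by
  intro E hE ε hε
  obtain ⟨δ, hδ, F, hEF, hF, H⟩ :=
    h5.exists_linearIsometryEquiv_norm_sub_le E hE (by positivity : 0 < ε / 3)
  refine ⟨δ, hδ, F, hEF, hF, fun ι ι' hι hι' => ?_⟩
  obtain ⟨T₁, h₁⟩ := H ι hι
  obtain ⟨T₂, h₂⟩ := H ι' hι'
  set T := T₁.symm.trans T₂
  refine ⟨T, ?_⟩
  have hswap : ‖(toCLM T₂).comp E.subtypeL - (toCLM T).comp (ι.comp (inclCLM hEF))‖
      = ‖ι.comp (inclCLM hEF) - (toCLM T₁).comp E.subtypeL‖ := by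
    rw [show toCLM T = (toCLM T₂).comp (toCLM T₁.symm) from rfl,
      ContinuousLinearMap.comp_assoc, ← ContinuousLinearMap.comp_sub,
      (isIsomEmb_toCLM T₂).norm_comp, ← norm_toCLM_comp_sub]
    exact norm_sub_rev (E := E →L[ℝ] X) _ _
  calc _ ≤ ‖ι'.comp (inclCLM hEF) - (toCLM T₂).comp E.subtypeL‖
        + ‖(toCLM T₂).comp E.subtypeL - (toCLM T).comp (ι.comp (inclCLM hEF))‖ :=
        norm_sub_le_norm_sub_add_norm_sub (E := E →L[ℝ] X) _ _ _
    _ ≤ ε / 3 + ε / 3 := by rw [hswap]; exact add_le_add h₂ h₁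
    _ < ε := by linarith

end Homogeneity

theorem guardedFraisse_equivalences (X : Type*) [NormedAddCommGroup X]
    [NormedSpace ℝ X] [CompleteSpace X] [TopologicalSpace.SeparableSpace X] :
    List.TFAE [GF1 X, GF2 X, GF3 X, GF4 X, GF5 X] := by
  tfae_have 1 → 3 := gf3_of_gf1
  tfae_have 3 → 4 := gf4_of_gf3
  tfae_have 4 → 2 := gf2_of_gf4
  tfae_have 2 → 5 := gf5_of_gf2
  tfae_have 5 → 1 := gf1_of_gf5
  tfae_finish
end
end

section
/- Every infinite-dimensional ω-categorical separable real Banach space X is relatively universal: for every separable Banach space Y, if Y is finitely representable in X then there exists a linear isometric embedding of Y into X. -/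
noncomputable section

open Real Metric

/-- `X` is ω-categorical (ε-net formulation of compactness of
`(B_X)^n ⫽ Iso(X)`). -/
def OmegaCategorical (X : Type*) [NormedAddCommGroup X] [NormedSpace ℝ X] : Prop :=
  ∀ n : ℕ, ∀ ε : ℝ, 0 < ε →
    ∃ S : Set (Fin n → X), S.Finite ∧ (∀ x ∈ S, ∀ i, ‖x i‖ ≤ 1) ∧
      ∀ y : Fin n → X, (∀ i, ‖y i‖ ≤ 1) →
        ∃ x ∈ S, ∃ T : X ≃ₗᵢ[ℝ] X, ∀ i, ‖y i - T (x i)‖ < ε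


/-!
Let `z` be a bounded sequence with dense span in `Y`, and `G k = span {z 0, …, z k}`. Finite
representability gives `2⁻ᵏ`-embeddings `T k : G k → X`, hence tuples `(T k (z i))ᵢ` in the unit
ball of `X`. Since `X` has, for every `n` and `ε`, a finite `ε`-net of `n`-tuples modulo `Iso(X)`,
a diagonal argument yields a subsequence `κ` and isometries `V m` with
`dist (V m (T (κ m) (z i))) (V (m + 1) (T (κ (m + 1)) (z i))) < 2⁻ᵐ` for `i < m`; so each
`V m (T (κ m) (z i))` converges to some `w i`. The distortions tend to `0`, so
`∑ lᵢ • z i ↦ ∑ lᵢ • w i` is a well-defined linear isometry on the span of `z`, and it extends to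
`Y` because `X` is complete.
-/

open Filter Topology Finsupp

def LinearMap.extendOfNormEq {𝕜 E Y X : Type*} [NontriviallyNormedField 𝕜] [AddCommGroup E]
    [Module 𝕜 E] [NormedAddCommGroup Y] [NormedSpace 𝕜 Y] [NormedAddCommGroup X]
    [NormedSpace 𝕜 X] [CompleteSpace X] {f : E →ₗ[𝕜] X} {e : E →ₗ[𝕜] Y} (h_dense : DenseRange e)
    (h_norm : ∀ x, ‖f x‖ = ‖e x‖) : Y →ₗᵢ[𝕜] X where
  toLinearMap := (f.extendOfNorm e).toLinearMap
  norm_map' := by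
    have h_bound : ∃ C, ∀ x, ‖f x‖ ≤ C * ‖e x‖ := ⟨1, fun x => by rw [h_norm, one_mul]⟩
    refine h_dense.induction ?_ (isClosed_eq (by fun_prop) continuous_norm)
    rintro _ ⟨x, rfl⟩
    simpa [LinearMap.extendOfNorm_eq h_dense h_bound] using h_norm x

theorem exists_seq_norm_le_dense_span (Y : Type*) [NormedAddCommGroup Y] [NormedSpace ℝ Y]
    [TopologicalSpace.SeparableSpace Y] {r : ℝ} (hr : 0 < r) :
    ∃ z : ℕ → Y, (∀ i, ‖z i‖ ≤ r) ∧ Dense (Submodule.span ℝ (Set.range z) : Set Y) := by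
  have hd := TopologicalSpace.denseRange_denseSeq Y
  set d := TopologicalSpace.denseSeq Y
  have hc : ∀ i, 0 < r / (‖d i‖ + 1) := fun i => by positivity
  refine ⟨fun i => (r / (‖d i‖ + 1)) • d i, fun i => ?_, ?_⟩
  · rw [norm_smul, Real.norm_of_nonneg (hc i).le, div_mul_eq_mul_div, div_le_iff₀ (by positivity)]
    nlinarith [norm_nonneg (d i)]
  · refine hd.mono ?_
    rintro _ ⟨i, rfl⟩
    rw [← inv_smul_smul₀ (hc i).ne' (d i)]
    exact Submodule.smul_mem _ _ (Submodule.subset_span ⟨i, rfl⟩)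

theorem IsEmbC.exists_linearCombination_bounds {ι Y X : Type*} [NormedAddCommGroup Y]
    [NormedSpace ℝ Y] [NormedAddCommGroup X] [NormedSpace ℝ X] {z : ι → Y} {s : Set ι} {ε : ℝ}
    {T : Submodule.span ℝ (z '' s) →L[ℝ] X} (hT : IsEmbC ε T) :
    ∃ t : ι → X, (∀ i, ‖t i‖ ≤ Real.exp ε * ‖z i‖) ∧ ∀ l ∈ supported ℝ ℝ s,
      Real.exp (-ε) * ‖linearCombination ℝ z l‖ ≤ ‖linearCombination ℝ t l‖ ∧
        ‖linearCombination ℝ t l‖ ≤ Real.exp ε * ‖linearCombination ℝ z l‖ := by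
  classical
  let u : ι → Submodule.span ℝ (z '' s) := fun i =>
    if h : i ∈ s then ⟨z i, Submodule.subset_span ⟨i, h, rfl⟩⟩ else 0
  refine ⟨(T : Submodule.span ℝ (z '' s) →ₗ[ℝ] X) ∘ u, fun i => ?_, fun l hl => ?_⟩
  · by_cases h : i ∈ s
    · simpa [u, h] using (hT (u i)).2
    · simp [u, h, Real.exp_pos ε]
  · have hu : (linearCombination ℝ u l : Y) = linearCombination ℝ z l := by
      rw [← Submodule.subtype_apply, apply_linearCombination]
      refine Finsupp.sum_congr fun i hi => ?_
      simp [u, (mem_supported ℝ l).1 hl hi]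
    rw [← apply_linearCombination]
    simpa only [ContinuousLinearMap.coe_coe, Submodule.coe_norm, hu] using
      hT (linearCombination ℝ u l)

theorem LinearIsometryEquiv.dist_symm_trans_apply_lt {X : Type*} [NormedAddCommGroup X]
    [NormedSpace ℝ X] (U U' : X ≃ₗᵢ[ℝ] X) {a b x : X} {δ₁ δ₂ : ℝ} (ha : dist a (U x) < δ₁)
    (hb : dist b (U' x) < δ₂) : dist a ((U'.symm.trans U) b) < δ₁ + δ₂ :=
  calc dist a ((U'.symm.trans U) b) ≤ dist a (U x) + dist (U x) (U (U'.symm b)) :=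
        dist_triangle _ _ _
    _ = dist a (U x) + dist b (U' x) := by
        rw [U.dist_map, ← U'.dist_map x, U'.apply_symm_apply, dist_comm b]
    _ < δ₁ + δ₂ := add_lt_add ha hb

theorem Set.exists_antitone_seq {α : Type*} (P : ℕ → Set α → Prop) {A₀ : Set α} (h₀ : P 0 A₀)
    (step : ∀ n A, P n A → ∃ B ⊆ A, P (n + 1) B) :
    ∃ F : ℕ → Set α, (∀ n, F (n + 1) ⊆ F n) ∧ ∀ n, P n (F n) := by
  choose! next next_sub next_P using step
  let F : ℕ → Set α := fun n => Nat.rec A₀ next n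
  have hF : ∀ n, P n (F n) := fun n => by
    induction n with
    | zero => exact h₀
    | succ n ih => exact next_P n (F n) ih
  exact ⟨F, fun n => next_sub n (F n) (hF n), hF⟩

namespace OmegaCategorical

variable {X : Type*} [NormedAddCommGroup X] [NormedSpace ℝ X]

theorem exists_infinite_subset_dist_lt (hcat : OmegaCategorical X) {α : Type*} {n : ℕ}
    (s : α → Fin n → X) (hs : ∀ k i, ‖s k i‖ ≤ 1) {A : Set α} (hA : A.Infinite) {δ : ℝ}
    (hδ : 0 < δ) : ∃ B ⊆ A, B.Infinite ∧ ∀ k ∈ B, ∀ l ∈ B,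
      ∃ W : X ≃ₗᵢ[ℝ] X, ∀ i, dist (s k i) (W (s l i)) < δ := by
  obtain ⟨S, hS, -, hnet⟩ := hcat n (δ / 2) (half_pos hδ)
  choose! x hxS U hU using fun k => hnet (s k) (hs k)
  obtain ⟨x₀, hx₀⟩ : ∃ x₀, (A ∩ x ⁻¹' {x₀}).Infinite := by
    by_contra! h
    exact hA <| Set.Finite.of_finite_fibers x
      (hS.subset (Set.image_subset_iff.2 fun k _ => hxS k)) fun x₀ _ => h x₀
  refine ⟨A ∩ x ⁻¹' {x₀}, Set.inter_subset_left, hx₀, fun k hk l hl => ⟨(U l).symm.trans (U k),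
    fun i => ?_⟩⟩
  have hk' := hU k i
  have hl' := hU l i
  rw [hk.2, ← dist_eq_norm] at hk'
  rw [hl.2, ← dist_eq_norm] at hl'
  simpa using (U k).dist_symm_trans_apply_lt (U l) hk' hl'

theorem exists_seq_dist_lt (hcat : OmegaCategorical X) (t : ℕ → ℕ → X)
    (ht : ∀ k i, ‖t k i‖ ≤ 1) : ∃ κ : ℕ → ℕ, (∀ n, n ≤ κ n) ∧ ∀ n, ∃ W : X ≃ₗᵢ[ℝ] X,
      ∀ i < n, dist (t (κ n) i) (W (t (κ (n + 1)) i)) < 2⁻¹ ^ n := by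
  let P : ℕ → Set ℕ → Prop := fun n A => A.Infinite ∧ ∀ k ∈ A, ∀ l ∈ A,
    ∃ W : X ≃ₗᵢ[ℝ] X, ∀ i < n, dist (t k i) (W (t l i)) < 2⁻¹ ^ n
  have h₀ : P 0 Set.univ := ⟨Set.infinite_univ, fun _ _ _ _ => ⟨.refl ℝ X, by simp⟩⟩
  have step : ∀ n A, P n A → ∃ B ⊆ A, P (n + 1) B := by
    intro n A hA
    obtain ⟨B, hBA, hB, hclose⟩ := hcat.exists_infinite_subset_dist_lt
      (fun k (i : Fin (n + 1)) => t k i) (fun k i => ht k i) hA.1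
      (by positivity : (0 : ℝ) < 2⁻¹ ^ (n + 1))
    refine ⟨B, hBA, hB, fun k hk l hl => ?_⟩
    obtain ⟨W, hW⟩ := hclose k hk l hl
    exact ⟨W, fun i hi => hW ⟨i, hi⟩⟩
  obtain ⟨F, hF_sub, hF⟩ := Set.exists_antitone_seq P h₀ step
  choose κ hκF hκ using fun n => (hF n).1.exists_gt n
  exact ⟨κ, fun n => (hκ n).le, fun n => (hF n).2 _ (hκF n) _ (hF_sub n (hκF (n + 1)))⟩

theorem exists_tendsto [CompleteSpace X] (hcat : OmegaCategorical X) (t : ℕ → ℕ → X)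
    (ht : ∀ k i, ‖t k i‖ ≤ 1) : ∃ (κ : ℕ → ℕ) (V : ℕ → X ≃ₗᵢ[ℝ] X) (w : ℕ → X),
      (∀ n, n ≤ κ n) ∧ ∀ i, Tendsto (fun m => V m (t (κ m) i)) atTop (𝓝 (w i)) := by
  obtain ⟨κ, hκ, hW⟩ := hcat.exists_seq_dist_lt t ht
  choose W hW using hW
  let V : ℕ → X ≃ₗᵢ[ℝ] X := fun n => Nat.rec (.refl ℝ X) (fun m Vm => (W m).trans Vm) n
  have hstep : ∀ i m, i < m →
      dist (V m (t (κ m) i)) (V (m + 1) (t (κ (m + 1)) i)) < 2⁻¹ ^ m := fun i m him => by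
    simpa [V, LinearIsometryEquiv.dist_map] using hW m i him
  -- the estimate on consecutive terms only holds once `m > i`, hence the shift
  have hcauchy : ∀ i, CauchySeq fun m => V (m + (i + 1)) (t (κ (m + (i + 1))) i) := fun i =>
    cauchySeq_of_le_geometric 2⁻¹ (2⁻¹ ^ (i + 1)) (by norm_num) fun m => by
      rw [mul_comm, ← pow_add, Nat.add_right_comm]
      exact (hstep i (m + (i + 1)) (by omega)).le
  choose w hw using fun i => cauchySeq_tendsto_of_complete (hcauchy i)
  exact ⟨κ, V, w, hκ, fun i => (tendsto_add_atTop_iff_nat (i + 1)).1 (hw i)⟩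

end OmegaCategorical

theorem Finsupp.eventually_mem_supported_Iic {α R : Type*} [SemilatticeSup α] [OrderBot α]
    [Semiring R] (l : α →₀ R) : ∀ᶠ a in atTop, l ∈ supported R R (Set.Iic a) :=
  eventually_atTop.2 ⟨l.support.sup id, fun _ ha => (mem_supported R l).2 fun _ hi =>
    (Finset.le_sup (f := id) hi).trans ha⟩

theorem norm_linearCombination_eq_of_tendsto {ι β Y X : Type*} [NormedAddCommGroup Y]
    [NormedSpace ℝ Y] [NormedAddCommGroup X] [NormedSpace ℝ X] {L : Filter β} [L.NeBot]
    {z : ι → Y} {t : β → ι → X} {w : ι → X} {ε : β → ℝ} (hε : Tendsto ε L (𝓝 0))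
    (ht : ∀ i, Tendsto (fun m => t m i) L (𝓝 (w i)))
    (hbound : ∀ l : ι →₀ ℝ, ∀ᶠ m in L,
      Real.exp (-ε m) * ‖linearCombination ℝ z l‖ ≤ ‖linearCombination ℝ (t m) l‖ ∧
        ‖linearCombination ℝ (t m) l‖ ≤ Real.exp (ε m) * ‖linearCombination ℝ z l‖)
    (l : ι →₀ ℝ) : ‖linearCombination ℝ w l‖ = ‖linearCombination ℝ z l‖ := by
  have hlim : Tendsto (fun m => linearCombination ℝ (t m) l) L (𝓝 (linearCombination ℝ w l)) :=
    tendsto_finsetSum _ fun i _ => (ht i).const_smul (l i)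
  have hexp : ∀ {δ : β → ℝ}, Tendsto δ L (𝓝 0) →
      Tendsto (fun m => Real.exp (δ m) * ‖linearCombination ℝ z l‖) L
        (𝓝 ‖linearCombination ℝ z l‖) := fun hδ => by
    simpa using ((Real.continuous_exp.tendsto 0).comp hδ).mul_const _
  refine tendsto_nhds_unique hlim.norm
    (tendsto_of_tendsto_of_tendsto_of_le_of_le' (hexp (by simpa using hε.neg)) (hexp hε) ?_ ?_)
  · exact (hbound l).mono fun _ h => h.1
  · exact (hbound l).mono fun _ h => h.2

theorem omegaCategorical_relativelyUniversal_general (X : Type*) [NormedAddCommGroup X]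
    [NormedSpace ℝ X] [CompleteSpace X] (hcat : OmegaCategorical X)
    (Y : Type*) [NormedAddCommGroup Y] [NormedSpace ℝ Y]
    [TopologicalSpace.SeparableSpace Y]
    (hfinrep : ∀ (G : Submodule ℝ Y), FiniteDimensional ℝ G →
      ∀ ε : ℝ, 0 < ε → ∃ T : G →L[ℝ] X, IsEmbC ε T) :
    Nonempty (Y →ₗᵢ[ℝ] X) := by
  obtain ⟨z, hz, hz_dense⟩ := exists_seq_norm_le_dense_span Y (Real.exp_pos (-1))
  choose T hT using fun k : ℕ => hfinrep _
    (FiniteDimensional.span_of_finite ℝ ((Set.finite_Iic k).image z)) (2⁻¹ ^ k) (by positivity)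
  choose t ht_norm ht_bounds using fun k => (hT k).exists_linearCombination_bounds
  have ht : ∀ k i, ‖t k i‖ ≤ 1 := fun k i => calc
    ‖t k i‖ ≤ Real.exp (2⁻¹ ^ k) * ‖z i‖ := ht_norm k i
    _ ≤ Real.exp 1 * Real.exp (-1) := by
      gcongr
      · exact pow_le_one₀ (by norm_num) (by norm_num)
      · exact hz i
    _ = 1 := by rw [← Real.exp_add, add_neg_cancel, Real.exp_zero]
  obtain ⟨κ, V, w, hκ, hw⟩ := hcat.exists_tendsto t ht
  have hκ_top : Tendsto κ atTop atTop := tendsto_atTop_mono hκ tendsto_id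
  have h_norm : ∀ l, ‖linearCombination ℝ w l‖ = ‖linearCombination ℝ z l‖ :=
    norm_linearCombination_eq_of_tendsto (ε := fun m => (2 : ℝ)⁻¹ ^ κ m)
      ((tendsto_pow_atTop_nhds_zero_of_lt_one (by norm_num) (by norm_num)).comp hκ_top) hw
      fun l => (hκ_top.eventually l.eventually_mem_supported_Iic).mono fun m hm => by
        have hV : linearCombination ℝ (fun i => V m (t (κ m) i)) l =
            V m (linearCombination ℝ (t (κ m)) l) := by
          simp [linearCombination_apply, map_finsuppSum]
        simpa only [hV, LinearIsometryEquiv.norm_map] using ht_bounds (κ m) l hm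
  have h_dense : DenseRange (linearCombination ℝ z) := by
    rwa [DenseRange, ← LinearMap.coe_range, range_linearCombination]
  exact ⟨LinearMap.extendOfNormEq h_dense h_norm⟩

/-- Every infinite-dimensional ω-categorical separable Banach space is relatively
universal. -/
theorem omegaCategorical_relativelyUniversal (X : Type*) [NormedAddCommGroup X]
    [NormedSpace ℝ X] [CompleteSpace X] [TopologicalSpace.SeparableSpace X]
    (hinf : ¬ FiniteDimensional ℝ X) (hcat : OmegaCategorical X)
    (Y : Type*) [NormedAddCommGroup Y] [NormedSpace ℝ Y] [CompleteSpace Y]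
    [TopologicalSpace.SeparableSpace Y]
    (hfinrep : ∀ (G : Submodule ℝ Y), FiniteDimensional ℝ G →
      ∀ ε : ℝ, 0 < ε → ∃ T : G →L[ℝ] X, IsEmbC ε T) :
    Nonempty (Y →ₗᵢ[ℝ] X) :=
  omegaCategorical_relativelyUniversal_general X hcat Y hfinrep
end
end

section
/- Let X be an infinite-dimensional ω-categorical separable real Banach space, E a finite-dimensional subspace of X, and ε > 0. Then there exists δ > 0 with the following property: for every f ∈ Emb_δ(E, X) there exists a linear isometric embedding g ∈ Emb(E, X) with ‖f − g‖ ≤ ε. -/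
noncomputable section

open Real Metric

/-!
Suppose not: then there are `fₖ ∈ Emb_{1/(k+1)}(E, X)` at distance more than `ε` from every
isometric embedding. By ω-categoricity the bounded set of operators `E →L[ℝ] X` is totally
bounded modulo the left action of `Iso(X)`, so, as in the proof that a complete totally bounded
space is sequentially compact, a subsequence of the `fₖ`, corrected by isometries `Vₘ`, converges
to some `g`. The limit `g` is an isometric embedding, and `Vₘ⁻¹ g` is then `ε`-close to `f_{φ m}`
for large `m`.
-/

open Filter Topology

section IsometricAction

variable {G Y : Type*} [Group G] [PseudoMetricSpace Y] [MulAction G Y] [IsIsometricSMul G Y]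

theorem dist_mul_inv_smul_le (x x' s : Y) (g g' : G) :
    dist x ((g * g'⁻¹) • x') ≤ dist x (g • s) + dist x' (g' • s) :=
  calc dist x ((g * g'⁻¹) • x') ≤ dist x (g • s) + dist (g • s) ((g * g'⁻¹) • x') :=
        dist_triangle _ _ _
    _ = dist x (g • s) + dist x' (g' • s) := by
        rw [mul_smul, dist_smul, ← dist_smul g' s, smul_inv_smul, dist_comm (g' • s)]

theorem exists_tendsto_smul_of_dist_smul_le [CompleteSpace Y] (x : ℕ → Y) (h : ℕ → G)
    {d : ℕ → ℝ} (hd : Summable d) (hx : ∀ m, dist (x m) (h m • x (m + 1)) ≤ d m) :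
    ∃ V : ℕ → G, ∃ z, Tendsto (fun m => V m • x m) atTop (𝓝 z) := by
  let V : ℕ → G := fun m => Nat.rec 1 (fun m V => V * h m) m
  refine ⟨V, cauchySeq_tendsto_of_complete (cauchySeq_of_dist_le_of_summable d (fun m => ?_) hd)⟩
  change dist (V m • x m) ((V m * h m) • x (m + 1)) ≤ d m
  rw [mul_smul, dist_smul]
  exact hx m

theorem exists_strictMono_tendsto_smul [CompleteSpace Y] (y : ℕ → Y)
    (hnet : ∀ η > 0, ∃ S : Set Y, S.Finite ∧ ∀ k, ∃ s ∈ S, ∃ g : G, dist (y k) (g • s) ≤ η) :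
    ∃ φ : ℕ → ℕ, StrictMono φ ∧
      ∃ V : ℕ → G, ∃ z, Tendsto (fun m => V m • y (φ m)) atTop (𝓝 z) := by
  let r : ℕ → ℝ := fun m => (1 / 2) ^ (m + 1)
  choose S hS hy using fun m => hnet (r m) (by positivity)
  -- A free ultrafilter picks, at every scale, one centre near which "most" `y k` lie.
  have hcentre : ∀ m, ∃ s, ∀ᶠ k in hyperfilter ℕ, ∃ g : G, dist (y k) (g • s) ≤ r m := fun m =>
    ((Ultrafilter.eventually_exists_mem_iff (hS m)).1 (.of_forall (hy m))).imp fun _ => And.right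
  choose a ha using hcentre
  have hfreq : ∀ m, ∃ᶠ k in atTop, ∀ j ∈ Set.Iic m, ∃ g : G, dist (y k) (g • a j) ≤ r j :=
    fun m => ((eventually_all_finite (Set.finite_Iic m)).2 fun j _ => ha j).frequently.filter_mono
      (hyperfilter_le_cofinite.trans Nat.cofinite_eq_atTop.le)
  obtain ⟨φ, hφ, hφa⟩ := extraction_forall_of_frequently hfreq
  have hstep : ∀ m, ∃ h : G, dist (y (φ m)) (h • y (φ (m + 1))) ≤ (1 / 2) ^ m := by
    intro m
    obtain ⟨g, hg⟩ := hφa m m (Set.mem_Iic.2 le_rfl)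
    obtain ⟨g', hg'⟩ := hφa (m + 1) m (Set.mem_Iic.2 m.le_succ)
    refine ⟨g * g'⁻¹, (dist_mul_inv_smul_le _ _ (a m) g g').trans ?_⟩
    calc _ ≤ r m + r m := add_le_add hg hg'
      _ = (1 / 2) ^ m := by ring
  choose h hh using hstep
  exact ⟨φ, hφ, exists_tendsto_smul_of_dist_smul_le _ h summable_geometric_two hh⟩

end IsometricAction

section Operators

variable {E X : Type*} [NormedAddCommGroup E] [NormedSpace ℝ E]
  [NormedAddCommGroup X] [NormedSpace ℝ X]

instance : MulAction (X ≃ₗᵢ[ℝ] X) (E →L[ℝ] X) where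
  smul T f := (toCLM T).comp f
  one_smul _ := ContinuousLinearMap.ext fun _ => rfl
  mul_smul _ _ _ := ContinuousLinearMap.ext fun _ => rfl

theorem LinearIsometryEquiv.smul_clm_apply (T : X ≃ₗᵢ[ℝ] X) (f : E →L[ℝ] X) (x : E) :
    (T • f) x = T (f x) :=
  rfl

instance : IsIsometricSMul (X ≃ₗᵢ[ℝ] X) (E →L[ℝ] X) :=
  ⟨fun T => Isometry.of_dist_eq fun f f' => by
    rw [dist_eq_norm, dist_eq_norm,
      ← T.toLinearIsometry.norm_toContinuousLinearMap_comp (g := f - f')]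
    exact congrArg norm (ContinuousLinearMap.comp_sub _ _ _).symm⟩

theorem IsEmbC.opNorm_le_s8 {C : ℝ} {f : E →L[ℝ] X} (hf : IsEmbC C f) : ‖f‖ ≤ exp C :=
  f.opNorm_le_bound (exp_pos C).le fun x => (hf x).2

theorem IsEmbC.smul {C : ℝ} {f : E →L[ℝ] X} (hf : IsEmbC C f) (T : X ≃ₗᵢ[ℝ] X) :
    IsEmbC C (T • f) := fun x => by
  simpa only [T.smul_clm_apply, T.norm_map] using hf x

theorem IsIsomEmb.smul {f : E →L[ℝ] X} (hf : IsIsomEmb f) (T : X ≃ₗᵢ[ℝ] X) :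
    IsIsomEmb (T • f) := fun x => by
  rw [T.smul_clm_apply, T.norm_map, hf x]

theorem isIsomEmb_of_tendsto {ι : Type*} {l : Filter ι} [l.NeBot] {f : ι → E →L[ℝ] X}
    {g : E →L[ℝ] X} {δ : ι → ℝ} (hf : Tendsto f l (𝓝 g)) (hδ : Tendsto δ l (𝓝 0))
    (hemb : ∀ i, IsEmbC (δ i) (f i)) : IsIsomEmb g := by
  intro x
  have hnorm : Tendsto (fun i => ‖f i x‖) l (𝓝 ‖g x‖) :=
    (((ContinuousLinearMap.apply ℝ X x).continuous.tendsto g).comp hf).norm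
  have hexp : ∀ u : ι → ℝ, Tendsto u l (𝓝 0) → Tendsto (fun i => exp (u i) * ‖x‖) l (𝓝 ‖x‖) :=
    fun u hu => by simpa using (tendsto_exp_nhds_zero_nhds_one.comp hu).mul_const ‖x‖
  exact tendsto_nhds_unique hnorm (tendsto_of_tendsto_of_tendsto_of_le_of_le
    (hexp _ (by simpa using hδ.neg)) (hexp δ hδ) (fun i => (hemb i x).1) (fun i => (hemb i x).2))

variable (E) in
theorem OmegaCategorical.exists_finite_net (hcat : OmegaCategorical X) [FiniteDimensional ℝ E]
    (R : ℝ) {η : ℝ} (hη : 0 < η) :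
    ∃ S : Set (E →L[ℝ] X), S.Finite ∧
      ∀ f : E →L[ℝ] X, ‖f‖ ≤ R → ∃ s ∈ S, ∃ T : X ≃ₗᵢ[ℝ] X, dist f (T • s) ≤ η := by
  let b := Module.finBasis ℝ E
  obtain ⟨K, hK, hKop⟩ := b.exists_opNorm_le (F := X)
  obtain ⟨M₀, hM₀⟩ := Finite.bddAbove_range fun i => R * ‖b i‖
  set M := max M₀ 1
  have hM : 0 < M := lt_max_of_lt_right one_pos
  obtain ⟨S₀, hS₀, -, hnet⟩ := hcat _ (η / (K * M)) (by positivity)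
  refine ⟨(fun x => M • b.constrL x) '' S₀, hS₀.image _, fun f hf => ?_⟩
  have hball : ∀ i, ‖M⁻¹ • f (b i)‖ ≤ 1 := fun i => by
    rw [norm_smul, norm_inv, Real.norm_of_nonneg hM.le, inv_mul_le_one₀ hM]
    calc ‖f (b i)‖ ≤ ‖f‖ * ‖b i‖ := f.le_opNorm _
      _ ≤ R * ‖b i‖ := by gcongr
      _ ≤ M := (hM₀ ⟨i, rfl⟩).trans (le_max_left _ _)
  obtain ⟨x, hx, T, hT⟩ := hnet _ hball
  refine ⟨_, Set.mem_image_of_mem _ hx, T, ?_⟩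
  rw [dist_eq_norm]
  calc ‖f - T • M • b.constrL x‖ ≤ K * (M * (η / (K * M))) := hKop (by positivity) fun i => ?_
    _ = η := by field_simp
  have hdiff : (f - T • M • b.constrL x) (b i) = M • (M⁻¹ • f (b i) - T (x i)) := by
    simp [T.smul_clm_apply, smul_sub, smul_inv_smul₀ hM.ne']
  rw [hdiff, norm_smul, Real.norm_of_nonneg hM.le]
  gcongr
  exact (hT i).le

end Operators

theorem perturbation_isometry_general (X : Type*) [NormedAddCommGroup X]
    [NormedSpace ℝ X] [CompleteSpace X]
    (hcat : OmegaCategorical X)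
    (E : Submodule ℝ X) (hE : FiniteDimensional ℝ E) (ε : ℝ) (hε : 0 < ε) :
    ∃ δ : ℝ, 0 < δ ∧ ∀ f : E →L[ℝ] X, IsEmbC δ f →
      ∃ g : E →L[ℝ] X, IsIsomEmb g ∧ ‖f - g‖ ≤ ε := by
  by_contra! hfar
  choose f hf_emb hf_far using fun k : ℕ => hfar (1 / (k + 1)) Nat.one_div_pos_of_nat
  have hf_bdd : ∀ k, ‖f k‖ ≤ exp 1 := fun k =>
    (hf_emb k).opNorm_le_s8.trans (exp_le_exp.2 (div_le_one_of_le₀ (by simp) (by positivity)))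
  obtain ⟨φ, hφ, V, g, hlim⟩ := exists_strictMono_tendsto_smul f fun η hη =>
    let ⟨S, hS, hnet⟩ := hcat.exists_finite_net E (exp 1) hη
    ⟨S, hS, fun k => hnet (f k) (hf_bdd k)⟩
  have hg : IsIsomEmb g := isIsomEmb_of_tendsto hlim
    (tendsto_one_div_add_atTop_nhds_zero_nat.comp hφ.tendsto_atTop) fun m => (hf_emb _).smul _
  obtain ⟨m, hm⟩ := (hlim.eventually (closedBall_mem_nhds g hε)).exists
  refine (hf_far (φ m) ((V m)⁻¹ • g) (hg.smul _)).not_ge ?_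
  rwa [← dist_eq_norm (f (φ m)), ← dist_smul (V m), smul_inv_smul]

/-- In an ω-categorical space, almost isometric embeddings of a fixed
finite-dimensional subspace are uniformly close to isometric embeddings. -/
theorem perturbation_isometry (X : Type*) [NormedAddCommGroup X]
    [NormedSpace ℝ X] [CompleteSpace X] [TopologicalSpace.SeparableSpace X]
    (hinf : ¬ FiniteDimensional ℝ X) (hcat : OmegaCategorical X)
    (E : Submodule ℝ X) (hE : FiniteDimensional ℝ E) (ε : ℝ) (hε : 0 < ε) :
    ∃ δ : ℝ, 0 < δ ∧ ∀ f : E →L[ℝ] X, IsEmbC δ f →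
      ∃ g : E →L[ℝ] X, IsIsomEmb g ∧ ‖f - g‖ ≤ ε :=
  perturbation_isometry_general X hcat E hE ε hε
end
end

section
/- Let p, q ∈ [1, ∞), k ∈ ℕ, and let f₁, …, f_k ∈ L_p(L_q) be pairwise disjoint, i.e. |f_i| ⊓ |f_j| = 0 in the lattice order of L_p(L_q) for all i ≠ j. Then there exists a surjective linear isometry U : L_p(L_q) → L_p(L_q) such that U(f_i) ≥ 0 for every i = 1, …, k. -/
/-!
Take `u = ∑ j, (f j)⁻` and let `U` change the sign of each fibre `h s ∈ L_q` on the support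
of `u s`; this is fibrewise an isometric involution. At a point where `f i` is negative, `u` is
nonzero and the sign is flipped; where `f i` is positive, disjointness forces every `f j` with
`j ≠ i` to vanish, so `u` vanishes and nothing changes.
The only analytic point is that `s ↦ U (h s)` is again measurable: flipping the sign of `φ` on
the support of `g` is a pointwise limit of lattice expressions, which are jointly continuous in
`(g, φ)`.
-/

noncomputable section

open MeasureTheory ENNReal

/-- The unit interval `[0,1]` as a measure space (with Lebesgue measure). -/
abbrev I01 : Type := Set.Icc (0:ℝ) 1

/-- `L_q([0,1])`. -/
abbrev LqSp (q : ℝ≥0∞) : Type := MeasureTheory.Lp ℝ q (volume : Measure I01)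

/-- The Bochner space `L_p([0,1]; L_q([0,1]))`, with its Banach lattice
structure. -/
abbrev LpLqSp (p q : ℝ≥0∞) [Fact (1 ≤ q)] : Type :=
  MeasureTheory.Lp (LqSp q) p (volume : Measure I01)

open Filter Topology

theorem ite_sum_negPart_nonneg {ι : Type*} (s : Finset ι) (a : ι → ℝ)
    (ha : ∀ i j, i ≠ j → |a i| ⊓ |a j| = 0) {i : ι} (hi : i ∈ s) :
    0 ≤ if ∑ j ∈ s, (a j)⁻ = 0 then a i else -a i := by
  split_ifs with h
  · exact negPart_eq_zero.mp <|
      (Finset.sum_eq_zero_iff_of_nonneg fun j _ => negPart_nonneg (a j)).mp h i hi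
  · obtain ⟨j, -, hj⟩ := Finset.exists_ne_zero_of_sum_ne_zero h
    have hj : a j < 0 := not_le.mp (mt negPart_eq_zero.mpr hj)
    rcases eq_or_ne i j with rfl | hij
    · linarith
    · have hai : a i = 0 := by
        by_contra hai
        linarith [lt_min (abs_pos.mpr hai) (abs_pos.mpr hj.ne), ha i j hij]
      simp [hai]

theorem abs_clamp_le (a : ℝ) {x : ℝ} (hx : 0 ≤ x) : |a ⊓ x ⊔ -x| ≤ |a| := by
  rcases le_total 0 a with ha | ha
  · rw [abs_of_nonneg (le_sup_of_le_left (le_inf ha hx)), abs_of_nonneg ha]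
    exact sup_le inf_le_left (by linarith)
  · rw [abs_of_nonpos (sup_le (inf_le_of_left_le ha) (by linarith)), abs_of_nonpos ha]
    exact neg_le_neg (le_sup_of_le_left (le_inf le_rfl (by linarith)))

theorem tendsto_sub_two_mul_clamp (a b : ℝ) (hb : 0 ≤ b) :
    Tendsto (fun n : ℕ => a - 2 * (a ⊓ n * b ⊔ -(n * b))) atTop
      (𝓝 (if b = 0 then a else -a)) := by
  split_ifs with hb₀
  · simp [hb₀]
  · have hb_pos : 0 < b := lt_of_le_of_ne hb (Ne.symm hb₀)
    refine tendsto_const_nhds.congr' ?_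
    filter_upwards
      [(tendsto_natCast_atTop_atTop.atTop_mul_const hb_pos).eventually_ge_atTop |a|] with n hn
    rw [inf_eq_left.mpr (le_of_abs_le hn), sup_eq_left.mpr (neg_le_of_abs_le hn)]
    ring

namespace MeasureTheory

theorem tendsto_eLpNorm_zero_of_dominated {α E : Type*} [MeasurableSpace α] {μ : Measure α}
    [NormedAddCommGroup E] {p : ℝ≥0∞} (hp₀ : p ≠ 0) (hp : p ≠ ∞) {F : ℕ → α → E} {g : α → ℝ}
    (hF : ∀ n, AEStronglyMeasurable (F n) μ) (hg : MemLp g p μ)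
    (hFg : ∀ n, ∀ᵐ t ∂μ, ‖F n t‖ ≤ g t)
    (hlim : ∀ᵐ t ∂μ, Tendsto (fun n => F n t) atTop (𝓝 0)) :
    Tendsto (fun n => eLpNorm (F n) p μ) atTop (𝓝 0) := by
  have hp_pos : 0 < p.toReal := ENNReal.toReal_pos hp₀ hp
  have hint : Tendsto (fun n => ∫⁻ t, ‖F n t‖ₑ ^ p.toReal ∂μ) atTop (𝓝 0) := by
    have := tendsto_lintegral_of_dominated_convergence' (fun t => ‖g t‖ₑ ^ p.toReal)
      (fun n => (hF n).enorm.pow_const p.toReal)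
      (fun n => (hFg n).mono fun t ht => ENNReal.rpow_le_rpow
        (enorm_le_iff_norm_le.mpr (ht.trans (le_abs_self _))) hp_pos.le)
      (lintegral_rpow_enorm_lt_top_of_eLpNorm_lt_top hp₀ hp hg.2).ne
      (hlim.mono fun t ht => by
        simpa [ENNReal.zero_rpow_of_pos hp_pos] using
          (continuous_enorm.tendsto 0 |>.comp ht).ennrpow_const p.toReal)
    simpa using this
  have := hint.ennrpow_const p.toReal⁻¹
  rw [ENNReal.zero_rpow_of_pos (inv_pos.mpr hp_pos)] at this
  refine this.congr fun n => ?_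
  rw [eLpNorm_eq_lintegral_rpow_enorm_toReal hp₀ hp, one_div]

namespace Lp

section Lattice

variable {α E : Type*} [MeasurableSpace α] {μ : Measure α} {p : ℝ≥0∞}
  [NormedAddCommGroup E] [Lattice E] [HasSolidNorm E] [IsOrderedAddMonoid E]

theorem coeFn_sum_negPart {ι : Type*} (s : Finset ι) (f : ι → Lp E p μ) :
    ⇑(∑ j ∈ s, (f j)⁻) =ᵐ[μ] fun t => ∑ j ∈ s, (f j t)⁻ := by
  classical
  induction s using Finset.induction_on with
  | empty =>
    simp only [Finset.sum_empty]
    exact Lp.coeFn_zero E p μ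
  | insert a s ha ih =>
    filter_upwards [Lp.coeFn_add (f a)⁻ (∑ j ∈ s, (f j)⁻), Lp.coeFn_sup (-f a) 0,
      Lp.coeFn_neg (f a), Lp.coeFn_zero E p μ, ih] with t hadd hsup hneg hzero hs
    rw [Finset.sum_insert ha, Finset.sum_insert ha, hadd, Pi.add_apply, hs, negPart_def,
      negPart_def, hsup, Pi.sup_apply, hneg, hzero, Pi.neg_apply, Pi.zero_apply]

theorem ae_pairwise_abs_inf_abs_eq_zero {ι : Type*} [Countable ι] (f : ι → Lp E p μ)
    (hf : ∀ i j, i ≠ j → |f i| ⊓ |f j| = 0) :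
    ∀ᵐ t ∂μ, ∀ i j, i ≠ j → |f i t| ⊓ |f j t| = 0 := by
  simp only [ae_all_iff]
  intro i j hij
  filter_upwards [Lp.coeFn_inf |f i| |f j|, Lp.coeFn_abs (f i), Lp.coeFn_abs (f j),
    Lp.coeFn_zero E p μ] with t hinf hi hj hzero
  rw [← hi, ← hj, ← Pi.inf_apply, ← hinf, hf i j hij, hzero, Pi.zero_apply]

end Lattice

section NegOnSupport

variable {α : Type*} [MeasurableSpace α] {μ : Measure α} {q : ℝ≥0∞}

theorem memLp_ite_neg (g φ : Lp ℝ q μ) :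
    MemLp (fun t => if g t = 0 then φ t else -φ t) q μ := by
  refine (Lp.memLp φ).of_le ?_ (ae_of_all _ fun t => by split_ifs <;> simp)
  have hφ := (Lp.stronglyMeasurable φ).measurable
  exact (Measurable.ite ((Lp.stronglyMeasurable g).measurable (measurableSet_singleton 0))
    hφ hφ.neg).aestronglyMeasurable

variable [Fact (1 ≤ q)]

def negOnSupport (g : Lp ℝ q μ) : Lp ℝ q μ →ₗᵢ[ℝ] Lp ℝ q μ where
  toFun φ := (memLp_ite_neg g φ).toLp _
  map_add' φ ψ := by
    refine Lp.ext ?_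
    filter_upwards [(memLp_ite_neg g (φ + ψ)).coeFn_toLp, (memLp_ite_neg g φ).coeFn_toLp,
      (memLp_ite_neg g ψ).coeFn_toLp, Lp.coeFn_add φ ψ,
      Lp.coeFn_add ((memLp_ite_neg g φ).toLp _) ((memLp_ite_neg g ψ).toLp _)]
      with t h h₁ h₂ hadd hadd'
    rw [h, hadd', Pi.add_apply, h₁, h₂, hadd, Pi.add_apply]
    split_ifs <;> ring
  map_smul' c φ := by
    refine Lp.ext ?_
    filter_upwards [(memLp_ite_neg g (c • φ)).coeFn_toLp, (memLp_ite_neg g φ).coeFn_toLp,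
      Lp.coeFn_smul c φ, Lp.coeFn_smul c ((memLp_ite_neg g φ).toLp _)]
      with t h h₁ hsmul hsmul'
    rw [h, RingHom.id_apply, hsmul', Pi.smul_apply, h₁, hsmul, Pi.smul_apply, smul_eq_mul,
      smul_eq_mul]
    split_ifs <;> ring
  norm_map' φ := by
    change ‖(memLp_ite_neg g φ).toLp _‖ = ‖φ‖
    rw [Lp.norm_toLp, Lp.norm_def]
    congr 1
    exact eLpNorm_congr_norm_ae (ae_of_all _ fun t => by split_ifs <;> simp)

theorem coeFn_negOnSupport (g φ : Lp ℝ q μ) :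
    ⇑(negOnSupport g φ) =ᵐ[μ] fun t => if g t = 0 then φ t else -φ t :=
  (memLp_ite_neg g φ).coeFn_toLp

theorem negOnSupport_involutive (g : Lp ℝ q μ) : Function.Involutive (negOnSupport g) := by
  intro φ
  refine Lp.ext ?_
  filter_upwards [coeFn_negOnSupport g (negOnSupport g φ), coeFn_negOnSupport g φ]
    with t h₂ h₁
  rw [h₂, h₁]
  split_ifs <;> simp

theorem negOnSupport_sum_negPart_nonneg {ι : Type*} [Fintype ι] (φ : ι → Lp ℝ q μ)
    (hφ : ∀ i j, i ≠ j → |φ i| ⊓ |φ j| = 0) (i : ι) :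
    0 ≤ negOnSupport (∑ j, (φ j)⁻) (φ i) := by
  rw [← Lp.coeFn_nonneg]
  filter_upwards [coeFn_negOnSupport (∑ j, (φ j)⁻) (φ i),
    Lp.coeFn_sum_negPart Finset.univ φ, Lp.ae_pairwise_abs_inf_abs_eq_zero φ hφ]
    with t h hsum hdisj
  rw [Pi.zero_apply, h, hsum]
  exact ite_sum_negPart_nonneg Finset.univ (fun j => φ j t) hdisj (Finset.mem_univ i)

end NegOnSupport

section NegOnSupportApprox

variable {α : Type*} [MeasurableSpace α] {μ : Measure α} {q : ℝ≥0∞}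

/-- `φ ⊓ n • |g| ⊔ -(n • |g|)` clamps `φ` to `[-n|g|, n|g|]`: it tends to `φ` on the support of
`g` and vanishes off it. -/
def negOnSupportApprox (n : ℕ) (g φ : Lp ℝ q μ) : Lp ℝ q μ :=
  φ - (2 : ℝ) • (φ ⊓ (n : ℝ) • |g| ⊔ -((n : ℝ) • |g|))

theorem coeFn_negOnSupportApprox (n : ℕ) (g φ : Lp ℝ q μ) :
    ⇑(negOnSupportApprox n g φ) =ᵐ[μ]
      fun t => φ t - 2 * (φ t ⊓ n * |g t| ⊔ -(n * |g t|)) := by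
  have hbound : ⇑((n : ℝ) • |g|) =ᵐ[μ] fun t => n * |g t| := by
    filter_upwards [Lp.coeFn_smul (n : ℝ) |g|, Lp.coeFn_abs g] with t hsmul habs
    rw [hsmul, Pi.smul_apply, habs, smul_eq_mul]
  unfold negOnSupportApprox
  set b := (n : ℝ) • |g|
  filter_upwards [Lp.coeFn_sub φ ((2 : ℝ) • (φ ⊓ b ⊔ -b)), Lp.coeFn_smul (2 : ℝ) (φ ⊓ b ⊔ -b),
    Lp.coeFn_sup (φ ⊓ b) (-b), Lp.coeFn_inf φ b,
    Lp.coeFn_neg b, hbound] with t hsub hsmul hsup hinf hneg hb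
  simp only [hsub, Pi.sub_apply, hsmul, Pi.smul_apply, hsup, Pi.sup_apply, hinf, Pi.inf_apply,
    hneg, Pi.neg_apply, hb, smul_eq_mul]

variable [Fact (1 ≤ q)]

theorem continuous_negOnSupportApprox (n : ℕ) :
    Continuous fun x : Lp ℝ q μ × Lp ℝ q μ => negOnSupportApprox n x.1 x.2 := by
  have habs : Continuous fun x : Lp ℝ q μ × Lp ℝ q μ => (n : ℝ) • |x.1| :=
    (continuous_fst.sup continuous_fst.neg).fun_const_smul _
  exact continuous_snd.sub (((continuous_snd.inf habs).sup habs.neg).fun_const_smul _)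

theorem tendsto_negOnSupportApprox (hq : q ≠ ∞) (g φ : Lp ℝ q μ) :
    Tendsto (fun n => negOnSupportApprox n g φ) atTop (𝓝 (negOnSupport g φ)) := by
  rw [Lp.tendsto_Lp_iff_tendsto_eLpNorm']
  refine tendsto_eLpNorm_zero_of_dominated (zero_lt_one.trans_le Fact.out).ne' hq
    (fun n => (Lp.aestronglyMeasurable _).sub (Lp.aestronglyMeasurable _))
    ((Lp.memLp φ).norm.const_mul 4) (fun n => ?_) ?_
  · filter_upwards [coeFn_negOnSupportApprox n g φ, coeFn_negOnSupport g φ] with t happrox h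
    have hclamp := abs_le.mp (abs_clamp_le (φ t) (by positivity : (0 : ℝ) ≤ n * |g t|))
    rw [Pi.sub_apply, happrox, h, Real.norm_eq_abs, Real.norm_eq_abs]
    split_ifs <;> refine abs_le.mpr ⟨?_, ?_⟩ <;> linarith [le_abs_self (φ t), neg_abs_le (φ t)]
  · filter_upwards [ae_all_iff.mpr fun n => coeFn_negOnSupportApprox n g φ,
      coeFn_negOnSupport g φ] with t happrox h
    simp only [Pi.sub_apply, happrox, h]
    simpa [abs_eq_zero] using (tendsto_sub_two_mul_clamp (φ t) |g t| (abs_nonneg _)).sub_const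
      (if g t = 0 then φ t else -φ t)

end NegOnSupportApprox

section Fiberwise

variable {β E : Type*} [MeasurableSpace β] {ν : Measure β} {p : ℝ≥0∞}
  [NormedAddCommGroup E] [NormedSpace ℝ E] (T : β → E →ₗᵢ[ℝ] E)

theorem memLp_fiberwise (h : Lp E p ν) (hTh : AEStronglyMeasurable (fun s => T s (h s)) ν) :
    MemLp (fun s => T s (h s)) p ν :=
  (Lp.memLp h).of_le hTh (ae_of_all _ fun s => ((T s).norm_map (h s)).le)

variable [Fact (1 ≤ p)] (hT : ∀ h : Lp E p ν, AEStronglyMeasurable (fun s => T s (h s)) ν)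

def fiberwise : Lp E p ν →ₗᵢ[ℝ] Lp E p ν where
  toFun h := (memLp_fiberwise T h (hT _)).toLp _
  map_add' h₁ h₂ := by
    refine Lp.ext ?_
    filter_upwards [(memLp_fiberwise T (h₁ + h₂) (hT _)).coeFn_toLp,
      (memLp_fiberwise T h₁ (hT _)).coeFn_toLp, (memLp_fiberwise T h₂ (hT _)).coeFn_toLp,
      Lp.coeFn_add h₁ h₂, Lp.coeFn_add ((memLp_fiberwise T h₁ (hT _)).toLp _)
        ((memLp_fiberwise T h₂ (hT _)).toLp _)] with s h h₁' h₂' hadd hadd'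
    rw [h, hadd', Pi.add_apply, h₁', h₂', hadd, Pi.add_apply, map_add]
  map_smul' c h := by
    refine Lp.ext ?_
    filter_upwards [(memLp_fiberwise T (c • h) (hT _)).coeFn_toLp,
      (memLp_fiberwise T h (hT _)).coeFn_toLp, Lp.coeFn_smul c h,
      Lp.coeFn_smul c ((memLp_fiberwise T h (hT _)).toLp _)] with s h' h₁ hsmul hsmul'
    rw [h', RingHom.id_apply, hsmul', Pi.smul_apply, h₁, hsmul, Pi.smul_apply, map_smul]
  norm_map' h := by
    change ‖(memLp_fiberwise T h (hT _)).toLp _‖ = ‖h‖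
    rw [Lp.norm_toLp, Lp.norm_def]
    congr 1
    exact eLpNorm_congr_norm_ae (ae_of_all _ fun s => (T s).norm_map (h s))

theorem coeFn_fiberwise (h : Lp E p ν) : ⇑(fiberwise T hT h) =ᵐ[ν] fun s => T s (h s) :=
  (memLp_fiberwise T h (hT _)).coeFn_toLp

theorem fiberwise_involutive (hT_inv : ∀ s, Function.Involutive (T s)) :
    Function.Involutive (fiberwise T hT) := by
  intro h
  refine Lp.ext ?_
  filter_upwards [coeFn_fiberwise T hT (fiberwise T hT h), coeFn_fiberwise T hT h] with s h₂ h₁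
  rw [h₂, h₁, hT_inv]

end Fiberwise

end Lp

theorem AEStronglyMeasurable.negOnSupport {α β : Type*} [MeasurableSpace α] {μ : Measure α}
    [MeasurableSpace β] {ν : Measure β} {q : ℝ≥0∞} [Fact (1 ≤ q)] (hq : q ≠ ∞)
    {u h : β → Lp ℝ q μ} (hu : AEStronglyMeasurable u ν) (hh : AEStronglyMeasurable h ν) :
    AEStronglyMeasurable (fun s => Lp.negOnSupport (u s) (h s)) ν :=
  aestronglyMeasurable_of_tendsto_ae atTop
    (fun n => (Lp.continuous_negOnSupportApprox n).comp_aestronglyMeasurable (hu.prodMk hh))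
    (ae_of_all _ fun s => Lp.tendsto_negOnSupportApprox hq (u s) (h s))

end MeasureTheory

theorem disjoint_turn_nonneg_general (p q : ℝ≥0∞) [Fact (1 ≤ p)] [Fact (1 ≤ q)]
    (hq : q ≠ ∞) (k : ℕ) (f : Fin k → LpLqSp p q)
    (hdisj : ∀ i j : Fin k, i ≠ j → |f i| ⊓ |f j| = 0) :
    ∃ U : LpLqSp p q ≃ₗᵢ[ℝ] LpLqSp p q, ∀ i, 0 ≤ U (f i) := by
  set u := ∑ j, (f j)⁻
  have hT (h : LpLqSp p q) :
      AEStronglyMeasurable (fun s => Lp.negOnSupport (u s) (h s)) volume :=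
    (Lp.aestronglyMeasurable u).negOnSupport hq (Lp.aestronglyMeasurable h)
  let U := Lp.fiberwise (fun s => Lp.negOnSupport (u s)) hT
  have hU : Function.Involutive U :=
    Lp.fiberwise_involutive _ hT fun s => Lp.negOnSupport_involutive (u s)
  refine ⟨LinearIsometryEquiv.ofSurjective U hU.surjective, fun i => ?_⟩
  rw [LinearIsometryEquiv.coe_ofSurjective, ← Lp.coeFn_nonneg]
  filter_upwards [Lp.coeFn_fiberwise _ hT (f i), Lp.coeFn_sum_negPart Finset.univ f,
    Lp.ae_pairwise_abs_inf_abs_eq_zero f hdisj] with s hUs hu hdisj_s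
  rw [Pi.zero_apply, hUs, hu]
  exact Lp.negOnSupport_sum_negPart_nonneg (fun j => f j s) hdisj_s i

/-- Pairwise disjoint elements of `L_p(L_q)` can be simultaneously turned into
nonnegative ones by a surjective linear isometry. -/
theorem disjoint_turn_nonneg (p q : ℝ≥0∞) [Fact (1 ≤ p)] [Fact (1 ≤ q)]
    (hp : p ≠ ∞) (hq : q ≠ ∞) (k : ℕ) (f : Fin k → LpLqSp p q)
    (hdisj : ∀ i j : Fin k, i ≠ j → |f i| ⊓ |f j| = 0) :
    ∃ U : LpLqSp p q ≃ₗᵢ[ℝ] LpLqSp p q, ∀ i, 0 ≤ U (f i) :=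
  disjoint_turn_nonneg_general p q hq k f hdisj
end
end

section
/- The Banach space C(2^ℕ) of continuous real-valued functions on the Cantor space 2^ℕ, equipped with the supremum norm, is ω-categorical: for every n ∈ ℕ and every ε > 0 there exist finitely many tuples x¹, …, xᵐ in the n-fold power of the closed unit ball of C(2^ℕ) such that for every tuple y in this power there are j ≤ m and a surjective linear isometry T of C(2^ℕ) with max_{i≤n} ‖y_i − T(xʲ_i)‖ < ε. -/
noncomputable section

namespace CantorOmega

abbrev X : Type := ℕ → Bool

/-! ### Basic homeomorphisms of the Cantor space -/

/-- Splitting off the first `k` coordinates. -/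
def splitK (k : ℕ) : X ≃ₜ (Fin k → Bool) × X where
  toFun f := (fun i => f i, fun m => f (m + k))
  invFun p := fun m => if h : m < k then p.1 ⟨m, h⟩ else p.2 (m - k)
  left_inv f := by
    funext m
    by_cases h : m < k
    · simp [h]
    · simp only [dif_neg h]
      rw [Nat.sub_add_cancel (Nat.le_of_not_lt h)]
  right_inv p := by
    refine Prod.ext ?_ ?_
    · funext i
      simp [i.2]
    · funext m
      have h : ¬ (m + k < k) := by omega
      simp only [dif_neg h, Nat.add_sub_cancel]
  continuous_toFun := by
    refine Continuous.prodMk ?_ ?_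
    · exact continuous_pi fun i => continuous_apply _
    · exact continuous_pi fun m => continuous_apply _
  continuous_invFun := by
    refine continuous_pi fun m => ?_
    by_cases h : m < k
    · simp only [dif_pos h]
      exact (continuous_apply _).comp continuous_fst
    · simp only [dif_neg h]
      exact (continuous_apply _).comp continuous_snd

/-- An equiv of discrete spaces is a homeomorphism. -/
def discHomeo {P Q : Type*} [TopologicalSpace P] [DiscreteTopology P]
    [TopologicalSpace Q] [DiscreteTopology Q] (e : P ≃ Q) : P ≃ₜ Q where
  toEquiv := e
  continuous_toFun := continuous_of_discreteTopology
  continuous_invFun := continuous_of_discreteTopology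

def boolProdHomeo : Bool × X ≃ₜ X :=
  (Homeomorph.prodCongr (discHomeo (Equiv.funUnique (Fin 1) Bool).symm)
    (Homeomorph.refl X)).trans (splitK 1).symm

def fin1ProdHomeo : Fin 1 × X ≃ₜ X :=
  (Homeomorph.prodCongr (discHomeo (Equiv.equivPUnit.{1,1} (Fin 1))) (Homeomorph.refl X)).trans
    (Homeomorph.punitProd X)

def sumXX : X ⊕ X ≃ₜ X :=
  ((Homeomorph.sumCongr fin1ProdHomeo.symm fin1ProdHomeo.symm).trans
    Homeomorph.sumProdDistrib.symm).trans <|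
  (Homeomorph.prodCongr (discHomeo ((finSumFinEquiv (m := 1) (n := 1)).trans finTwoEquiv))
    (Homeomorph.refl X)).trans boolProdHomeo

/-- `Fin (m+1) × X ≃ₜ X`. -/
def finProdHomeo : ∀ m : ℕ, Fin (m + 1) × X ≃ₜ X
  | 0 => fin1ProdHomeo
  | (m + 1) =>
    ((Homeomorph.prodCongr (discHomeo (finSumFinEquiv (m := m + 1) (n := 1)).symm)
      (Homeomorph.refl X)).trans Homeomorph.sumProdDistrib).trans <|
      (Homeomorph.sumCongr (finProdHomeo m) fin1ProdHomeo).trans sumXX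

/-- `F × X ≃ₜ X` for any nonempty finite discrete `F`. -/
def fintypeProdHomeo (F : Type) [Fintype F] [Nonempty F] [TopologicalSpace F]
    [DiscreteTopology F] : F × X ≃ₜ X := by
  refine (Homeomorph.prodCongr (discHomeo (Fintype.equivFin F)) (Homeomorph.refl X)).trans ?_
  have h : Fintype.card F = (Fintype.card F - 1) + 1 :=
    (Nat.succ_pred_eq_of_pos Fintype.card_pos).symm
  exact (Homeomorph.prodCongr (discHomeo (finCongr h)) (Homeomorph.refl X)).trans
    (finProdHomeo (Fintype.card F - 1))

/-! ### A continuity helper -/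

lemma continuous_of_discrete_prod {P W Z : Type*} [TopologicalSpace P] [DiscreteTopology P]
    [TopologicalSpace W] [TopologicalSpace Z] (f : P × W → Z)
    (h : ∀ p, Continuous fun x => f (p, x)) : Continuous f := by
  rw [continuous_iff_continuousAt]
  rintro ⟨p, x⟩
  have h1 : ContinuousAt (fun q : P × W => f (p, q.2)) (p, x) :=
    (h p).continuousAt.comp continuousAt_snd
  refine h1.congr ?_
  have hmem : {q : P × W | q.1 = p} ∈ nhds (p, x) := by
    have : IsOpen {q : P × W | q.1 = p} :=
      (isOpen_discrete {p}).preimage continuous_fst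
    exact this.mem_nhds rfl
  filter_upwards [hmem] with q hq
  rw [show f (p, q.2) = f (q.1, q.2) by rw [hq]]

/-! ### The matching homeomorphism -/

variable {k N : ℕ} (θ : Fin N × X ≃ₜ X) (ρ : (Fin k → Bool) → Fin N)
  (hρ : ∀ t, Nonempty {p // ρ p = t})

def mEquiv : X ≃ X :=
  (splitK k).toEquiv.trans <|
    (((Equiv.sigmaFiberEquiv ρ).symm.prodCongr (Equiv.refl X)).trans
      (Equiv.sigmaProdDistrib _ X)).trans <|
    ((Equiv.sigmaCongrRight fun t =>
        (@fintypeProdHomeo {p // ρ p = t} _ (hρ t) _ _).toEquiv).trans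
      (Equiv.sigmaEquivProd (Fin N) X)).trans θ.toEquiv

lemma mEquiv_continuous : Continuous (mEquiv θ ρ hρ) := by
  have c2 : Continuous (fun q : (Fin k → Bool) × X =>
      (⟨ρ q.1, (⟨q.1, rfl⟩, q.2)⟩ : Σ t : Fin N, {p // ρ p = t} × X)) := by
    refine continuous_of_discrete_prod _ fun p => ?_
    show Continuous fun x : X =>
      (Sigma.mk (ρ p) ((⟨p, rfl⟩ : {q // ρ q = ρ p}), x) : Σ t : Fin N, {p // ρ p = t} × X)
    exact Continuous.comp continuous_sigmaMk (continuous_const.prodMk continuous_id)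
  have c3 : Continuous (fun z : Σ t : Fin N, ({p // ρ p = t} × X) =>
      (⟨z.1, (@fintypeProdHomeo {p // ρ p = z.1} _ (hρ z.1) _ _) z.2⟩ : Σ _ : Fin N, X)) := by
    refine continuous_sigma fun t => ?_
    show Continuous fun a : {p // ρ p = t} × X =>
      (Sigma.mk t ((@fintypeProdHomeo {p // ρ p = t} _ (hρ t) _ _) a) : Σ _ : Fin N, X)
    exact Continuous.comp continuous_sigmaMk (Homeomorph.continuous _)
  have c4 : Continuous (fun z : Σ _ : Fin N, X => ((z.1, z.2) : Fin N × X)) :=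
    continuous_sigma fun t => continuous_const.prodMk continuous_id
  exact θ.continuous.comp (c4.comp (c3.comp (c2.comp (splitK k).continuous)))

def mHomeo : X ≃ₜ X :=
  Continuous.homeoOfEquivCompactToT2 (f := mEquiv θ ρ hρ) (mEquiv_continuous θ ρ hρ)

lemma mHomeo_fst (f : X) :
    (θ.symm ((mHomeo θ ρ hρ) f)).1 = ρ (fun i => f i) := by
  have h1 : (mHomeo θ ρ hρ) f = θ (ρ (fun i => f i),
      (@fintypeProdHomeo {p // ρ p = ρ (fun i => f i)} _ (hρ _) _ _)
        (⟨fun i => f i, rfl⟩, fun m => f (m + k))) := rfl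
  rw [h1, Homeomorph.symm_apply_apply]

/-! ### Composition isometry -/

/-- Composition with a homeomorphism as a linear isometry equivalence. -/
def compIso (φ : X ≃ₜ X) : C(X, ℝ) ≃ₗᵢ[ℝ] C(X, ℝ) where
  toFun g := g.comp ⟨φ, φ.continuous⟩
  invFun g := g.comp ⟨φ.symm, φ.symm.continuous⟩
  map_add' _ _ := ContinuousMap.ext fun _ => rfl
  map_smul' _ _ := ContinuousMap.ext fun _ => rfl
  left_inv g := ContinuousMap.ext fun x => by simp
  right_inv g := ContinuousMap.ext fun x => by simp
  norm_map' g := by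
    have key : ∀ (ψ : X ≃ₜ X) (h : C(X, ℝ)), ‖h.comp ⟨ψ, ψ.continuous⟩‖ ≤ ‖h‖ := by
      intro ψ h
      rw [ContinuousMap.norm_le _ (norm_nonneg h)]
      intro x
      exact h.norm_coe_le_norm (ψ x)
    refine le_antisymm (key φ g) ?_
    have h2 := key φ.symm (g.comp ⟨φ, φ.continuous⟩)
    have h3 : (g.comp ⟨φ, φ.continuous⟩).comp ⟨φ.symm, φ.symm.continuous⟩ = g :=
      ContinuousMap.ext fun x => by simp
    rwa [h3] at h2

/-! ### Uniform continuity -/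

/-- Cylinders are a neighborhood basis. -/
lemma cylinder_subset_of_isOpen {U : Set X} (hU : IsOpen U) {f : X} (hf : f ∈ U) :
    ∃ k, ∀ g : X, (∀ j, j < k → g j = f j) → g ∈ U := by
  obtain ⟨I, u, h1, h2⟩ := isOpen_pi_iff.1 hU f hf
  refine ⟨(I.sup id) + 1, fun g hg => h2 ?_⟩
  intro i hi
  have : g i = f i := hg i (Nat.lt_succ_of_le (Finset.le_sup (f := id) hi))
  rw [this]
  exact (h1 i hi).2

lemma cylinder_isOpen (f : X) (k : ℕ) : IsOpen {g : X | ∀ j, j < k → g j = f j} := by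
  have : {g : X | ∀ j, j < k → g j = f j} =
      ⋂ j : Fin k, (fun g : X => g j) ⁻¹' {f j} := by
    ext g
    simp [Fin.forall_iff]
  rw [this]
  exact isOpen_iInter_of_finite fun j => (isOpen_discrete _).preimage (continuous_apply _)

/-- Uniform continuity on the Cantor space. -/
lemma uniform_approx (y : C(X, ℝ)) {δ : ℝ} (hδ : 0 < δ) :
    ∃ k, ∀ f g : X, (∀ j, j < k → f j = g j) → |y f - y g| < δ := by
  have hU : ∀ f : X, IsOpen {g : X | |y g - y f| < δ / 2} := by
    intro f
    have : Continuous fun g : X => |y g - y f| :=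
      (y.continuous.sub continuous_const).abs
    exact this.isOpen_preimage (Set.Iio (δ / 2)) isOpen_Iio
  have hex : ∀ f : X, ∃ k, ∀ g : X, (∀ j, j < k → g j = f j) → |y g - y f| < δ / 2 := by
    intro f
    obtain ⟨k, hk⟩ := cylinder_subset_of_isOpen (hU f)
      (by simp [abs_of_nonneg, hδ.le, half_pos hδ] : f ∈ {g : X | |y g - y f| < δ / 2})
    exact ⟨k, hk⟩
  choose kf hkf using hex
  obtain ⟨s, hs⟩ := isCompact_univ.elim_finite_subcover
    (fun f : X => {g : X | ∀ j, j < kf f → g j = f j})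
    (fun f => cylinder_isOpen f (kf f))
    (fun f _ => Set.mem_iUnion.2 ⟨f, fun j _ => rfl⟩)
  refine ⟨s.sup kf, fun f g hfg => ?_⟩
  obtain ⟨f₀, hf₀s, hf₀⟩ := by
    have := hs (Set.mem_univ f)
    simpa using this
  have hgf₀ : ∀ j, j < kf f₀ → g j = f₀ j := by
    intro j hj
    rw [← hfg j (lt_of_lt_of_le hj (Finset.le_sup hf₀s))]
    exact hf₀ j hj
  have h1 := hkf f₀ f hf₀
  have h2 := hkf f₀ g hgf₀
  calc |y f - y g| ≤ |y f - y f₀| + |y g - y f₀| := by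
        rw [abs_sub_comm (y g) (y f₀)]; exact abs_sub_le _ _ _
    _ < δ / 2 + δ / 2 := add_lt_add h1 h2
    _ = δ := add_halves δ

/-! ### Grid approximation -/

lemma grid_approx {δ : ℝ} (hδ : 0 < δ) :
    ∃ G : Finset ℝ, (∀ g ∈ G, |g| ≤ 1) ∧
      ∀ t : ℝ, |t| ≤ 1 → ∃ g ∈ G, |t - g| < δ := by
  classical
  refine ⟨(Finset.range (⌈2 / δ⌉₊ + 1)).image (fun j : ℕ => min 1 (-1 + (j : ℝ) * δ)), ?_, ?_⟩
  · intro g hg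
    simp only [Finset.mem_image] at hg
    obtain ⟨j, _, rfl⟩ := hg
    rw [abs_le]
    constructor
    · refine le_min (by norm_num) ?_
      have : (0 : ℝ) ≤ (j : ℝ) * δ := mul_nonneg (by positivity) hδ.le
      linarith
    · exact min_le_left _ _
  · intro t ht
    rw [abs_le] at ht
    set j := ⌊(t + 1) / δ⌋₊ with hj
    have hjle : (j : ℝ) ≤ (t + 1) / δ := Nat.floor_le (div_nonneg (by linarith) hδ.le)
    have hjlt : (t + 1) / δ < j + 1 := Nat.lt_floor_add_one _
    have hjδ : (j : ℝ) * δ ≤ t + 1 := (le_div_iff₀ hδ).1 hjle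
    have hjδ' : t + 1 < ((j : ℝ) + 1) * δ := (div_lt_iff₀ hδ).1 hjlt
    have hg0 : -1 + (j : ℝ) * δ ≤ t := by linarith
    have hmin : min 1 (-1 + (j : ℝ) * δ) = -1 + (j : ℝ) * δ :=
      min_eq_right (le_trans hg0 ht.2)
    refine ⟨min 1 (-1 + (j : ℝ) * δ), ?_, ?_⟩
    · refine Finset.mem_image_of_mem (fun j : ℕ => min 1 (-1 + (j : ℝ) * δ))
        (Finset.mem_range.2 ?_)
      have h2δ : (t + 1) / δ ≤ 2 / δ := by gcongr; linarith [ht.2]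
      exact Nat.lt_succ_of_le (le_trans (Nat.floor_mono h2δ) (Nat.floor_le_ceil _))
    · rw [hmin, abs_of_nonneg (by linarith)]
      linarith

/-! ### The canonical tuples -/

def theta (N : ℕ) (h : 0 < N) : Fin N × X ≃ₜ X :=
  @fintypeProdHomeo (Fin N) _ ⟨⟨0, h⟩⟩ _ _

def canonical {n : ℕ} (V : Finset (Fin n → ℝ)) (h : V.Nonempty) : Fin n → C(X, ℝ) :=
  fun i =>
    ⟨fun f => (V.equivFin.symm ((theta V.card (Finset.card_pos.2 h)).symm f).1 : Fin n → ℝ) i,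
      by
        exact Continuous.comp
          (continuous_of_discreteTopology :
            Continuous fun t : Fin V.card => (V.equivFin.symm t : Fin n → ℝ) i)
          (continuous_fst.comp (theta V.card (Finset.card_pos.2 h)).symm.continuous)⟩

def canonicalT {n : ℕ} (V : Finset (Fin n → ℝ)) : Fin n → C(X, ℝ) :=
  if h : V.Nonempty then canonical V h else 0

end CantorOmega

open CantorOmega in
/-- The Banach space `C(2^ℕ)` of continuous real-valued functions on the
Cantor space, with the supremum norm, is ω-categorical: `ε`-net formulation of
the compactness of `(B_X)^n ⫽ Iso(X)` for every `n`. -/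
theorem cantor_continuousFunctions_omegaCategorical :
    ∀ n : ℕ, ∀ ε : ℝ, 0 < ε →
      ∃ S : Set (Fin n → C(ℕ → Bool, ℝ)), S.Finite ∧
        (∀ x ∈ S, ∀ i, ‖x i‖ ≤ 1) ∧
        ∀ y : Fin n → C(ℕ → Bool, ℝ), (∀ i, ‖y i‖ ≤ 1) →
          ∃ x ∈ S, ∃ T : C(ℕ → Bool, ℝ) ≃ₗᵢ[ℝ] C(ℕ → Bool, ℝ),
            ∀ i, ‖y i - T (x i)‖ < ε := by
  intro n ε hε
  classical
  have hε4 : (0 : ℝ) < ε / 4 := by linarith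
  obtain ⟨G, hG1, hG2⟩ := grid_approx hε4
  set GS : Finset (Fin n → ℝ) := Fintype.piFinset (fun _ : Fin n => G) with hGS
  refine ⟨canonicalT '' ↑GS.powerset, (GS.powerset.finite_toSet).image _, ?_, ?_⟩
  · -- norm bounds
    rintro x ⟨V, hV, rfl⟩
    intro i
    rw [canonicalT]
    split_ifs with h
    · rw [ContinuousMap.norm_le _ (by norm_num : (0:ℝ) ≤ 1)]
      intro f
      have hmem : (V.equivFin.symm ((theta V.card (Finset.card_pos.2 h)).symm f).1 : Fin n → ℝ)
          ∈ V := (V.equivFin.symm _).2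
      have hsub : V ⊆ GS := Finset.mem_powerset.1 (by simpa using hV)
      have : (V.equivFin.symm ((theta V.card (Finset.card_pos.2 h)).symm f).1 : Fin n → ℝ) i
          ∈ G := by
        have := hsub hmem
        rw [hGS, Fintype.mem_piFinset] at this
        exact this i
      simpa [canonical, Real.norm_eq_abs] using hG1 _ this
    · simp
  · -- main approximation
    intro y hy
    -- uniform continuity
    have hk : ∀ i : Fin n, ∃ k, ∀ f g : X, (∀ j, j < k → f j = g j) → |y i f - y i g| < ε / 4 :=
      fun i => uniform_approx (y i) hε4
    choose kk hkk using hk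
    set k := Finset.univ.sup kk with hkdef
    have hkk' : ∀ (i : Fin n) (f g : X), (∀ j, j < k → f j = g j) → |y i f - y i g| < ε / 4 :=
      fun i f g hfg => hkk i f g fun j hj =>
        hfg j (lt_of_lt_of_le hj (Finset.le_sup (Finset.mem_univ i)))
    -- extension of patterns
    set ext : (Fin k → Bool) → X := fun p m => if h : m < k then p ⟨m, h⟩ else false with hext
    -- snapped values
    have hsnap : ∀ (p : Fin k → Bool) (i : Fin n), ∃ g ∈ G, |y i (ext p) - g| < ε / 4 := by
      intro p i
      refine hG2 _ ?_
      calc |y i (ext p)| = ‖y i (ext p)‖ := (Real.norm_eq_abs _).symm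
        _ ≤ ‖y i‖ := (y i).norm_coe_le_norm _
        _ ≤ 1 := hy i
    choose w hwG hw using hsnap
    set V : Finset (Fin n → ℝ) := Finset.image (fun p => w p) Finset.univ with hVdef
    have hVne : V.Nonempty :=
      ⟨w (fun _ => false), Finset.mem_image_of_mem _ (Finset.mem_univ _)⟩
    have hN : 0 < V.card := Finset.card_pos.2 hVne
    set θ := theta V.card hN with hθdef
    have hwV : ∀ p, w p ∈ V := fun p => Finset.mem_image_of_mem _ (Finset.mem_univ _)
    set ρ : (Fin k → Bool) → Fin V.card := fun p => V.equivFin ⟨w p, hwV p⟩ with hρdef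
    have hρ : ∀ t, Nonempty {p // ρ p = t} := by
      intro t
      obtain ⟨p, -, hp⟩ := Finset.mem_image.1 (V.equivFin.symm t).2
      refine ⟨⟨p, ?_⟩⟩
      have : (⟨w p, hwV p⟩ : {z // z ∈ V}) = V.equivFin.symm t := Subtype.ext hp
      rw [hρdef]
      simp only [this, Equiv.apply_symm_apply]
    set ψ := mHomeo θ ρ hρ with hψdef
    have hVmem : V ∈ GS.powerset := by
      refine Finset.mem_powerset.2 fun z hz => ?_
      obtain ⟨p, -, rfl⟩ := Finset.mem_image.1 hz
      rw [hGS, Fintype.mem_piFinset]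
      exact fun i => hwG p i
    refine ⟨canonicalT V, ⟨V, Finset.mem_coe.2 hVmem, rfl⟩, compIso ψ, ?_⟩
    intro i
    rw [ContinuousMap.norm_lt_iff _ hε]
    intro f
    -- compute the composed value
    have hx : canonicalT V = canonical V hVne := dif_pos hVne
    set p0 : Fin k → Bool := fun j => f j with hp0
    have hval : (compIso ψ (canonicalT V i)) f = w p0 i := by
      rw [hx]
      show (canonical V hVne i) (ψ f) = w p0 i
      show (V.equivFin.symm ((theta V.card (Finset.card_pos.2 hVne)).symm (ψ f)).1
        : Fin n → ℝ) i = w p0 i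
      have h1 : ((theta V.card (Finset.card_pos.2 hVne)).symm (ψ f)).1 = ρ p0 :=
        mHomeo_fst θ ρ hρ f
      rw [h1, hρdef]
      simp only [Equiv.symm_apply_apply]
    rw [ContinuousMap.sub_apply, hval]
    have hagree : ∀ j, j < k → f j = ext p0 j := by
      intro j hj
      rw [hext]
      simp [hj, hp0]
    have h1 : |y i f - y i (ext p0)| < ε / 4 := hkk' i f (ext p0) hagree
    have h2 : |y i (ext p0) - w p0 i| < ε / 4 := hw p0 i
    calc ‖y i f - w p0 i‖ = |y i f - w p0 i| := Real.norm_eq_abs _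
      _ ≤ |y i f - y i (ext p0)| + |y i (ext p0) - w p0 i| := by
          have := abs_sub_le (y i f) (y i (ext p0)) (w p0 i)
          linarith [this]
      _ < ε / 4 + ε / 4 := add_lt_add h1 h2
      _ < ε := by linarith
end
end
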